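/- arXiv:2603.04344 — 7 statements merged into one kernel-verified Lean document; each statement's English description precedes it below -/
import Mathlib

section
/- Let D ≥ 35 and let e be a directed edge of K(2,D) whose edge-word w(e) is an unbordered 7/4⁺-power-free ternary word of length D+1. Then cong(e) > τ(2,D). -/
open scoped BigOperators Classical

namespace Kautz

/-- A vertex of the Kautz digraph `K(d,D)`: a word of length `D` over the
alphabet `{0,1,…,d}` in which adjacent letters are distinct. -/
structure Vertex (d D : ℕ) where
  word : List (Fin (d+1))
  length_eq : word.length = D
  chain : word.Chain' (· ≠ ·)

/-- Adjacency in `K(d,D)`: there is an edge `u → v` iff some word `w` of length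
`D+1` with adjacent letters distinct has `u` as its prefix of length `D` and
`v` as its suffix of length `D`. -/
def Adj {d D : ℕ} (u v : Vertex d D) : Prop :=
  ∃ w : List (Fin (d+1)), w.length = D + 1 ∧ w.Chain' (· ≠ ·) ∧
    u.word = w.dropLast ∧ v.word = w.tail

/-- A directed edge of `K(d,D)`. -/
structure Edge (d D : ℕ) where
  src : Vertex d D
  tgt : Vertex d D
  adj : Adj src tgt

/-- The edge-word `w(e) = a₀a₁⋯a_D` of an edge `e : u → v`, namely `u`
followed by the last letter of `v`. -/
def Edge.word {d D : ℕ} (e : Edge d D) : List (Fin (d+1)) :=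
  e.src.word ++ e.tgt.word.drop (D - 1)

/-- `p` is a walk from `x` to `y`, recorded as the list of successive vertices. -/
def IsWalk {d D : ℕ} (p : List (Vertex d D)) (x y : Vertex d D) : Prop :=
  p.head? = some x ∧ p.getLast? = some y ∧ p.Chain' Adj

/-- Directed graph distance in `K(d,D)`. -/
noncomputable def dist {d D : ℕ} (x y : Vertex d D) : ℕ :=
  sInf {k | ∃ p : List (Vertex d D), IsWalk p x y ∧ p.length = k + 1}

/-- `N(e;k,t)`: the number of ordered pairs `(x,y)` with `dist x y = k` such
that some geodesic (walk of length `k = dist x y`) from `x` to `y` uses `e` as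
its `t`-th edge. -/
noncomputable def N {d D : ℕ} (e : Edge d D) (k t : ℕ) : ℕ :=
  Set.ncard {xy : Vertex d D × Vertex d D |
    dist xy.1 xy.2 = k ∧
    ∃ p : List (Vertex d D), IsWalk p xy.1 xy.2 ∧ p.length = k + 1 ∧
      p[t-1]? = some e.src ∧ p[t]? = some e.tgt}

/-- `U_k(e) = ∑_{t=1}^{k} N(e;k,t)`. -/
noncomputable def U {d D : ℕ} (e : Edge d D) (k : ℕ) : ℕ :=
  ∑ t ∈ Finset.Icc 1 k, N e k t

/-- `cong(e) = ∑_{k=1}^{D} U_k(e)`. -/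
noncomputable def cong {d D : ℕ} (e : Edge d D) : ℕ :=
  ∑ k ∈ Finset.Icc 1 D, U e k

/-- `τ(d,D) = (D−1)·d^{D−2} + D·d^{D−1}`. -/
def tau (d D : ℕ) : ℕ := (D - 1) * d ^ (D - 2) + D * d ^ (D - 1)

/-- A word has a border: some proper nonempty prefix equals the suffix of the
same length. -/
def HasBorder {α : Type*} (w : List α) : Prop :=
  ∃ ℓ, 1 ≤ ℓ ∧ ℓ ≤ w.length - 1 ∧ w.take ℓ = w.drop (w.length - ℓ)

/-- An unbordered word. -/
def Unbordered {α : Type*} (w : List α) : Prop := ¬ HasBorder w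

/-- A square-free word: no nonempty factor of the form `XX`. -/
def SquareFree {α : Type*} (w : List α) : Prop :=
  ¬ ∃ X : List α, X ≠ [] ∧ (X ++ X) <:+: w

/-- A `7/4⁺`-power-free word: no factor `x^k y` with `x` nonempty, `k ≥ 1`,
`y` a prefix of `x`, and `(k·|x| + |y|)/|x| > 7/4`. -/
def SevenFourthsPlusFree {α : Type*} (w : List α) : Prop :=
  ¬ ∃ (x y : List α) (k : ℕ), x ≠ [] ∧ 1 ≤ k ∧ y <+: x ∧
    ((List.replicate k x).flatten ++ y) <:+: w ∧
    7 * x.length < 4 * (k * x.length + y.length)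

/-- A word over `{0,1,…,d}` is ternary if it uses only the letters `{0,1,2}`. -/
def IsTernary {n : ℕ} (w : List (Fin n)) : Prop := ∀ a ∈ w, (a : ℕ) < 3

/-- The suffix of `w` of length `t`. -/
def suffixWord {α : Type*} (w : List α) (t : ℕ) : List α := w.drop (w.length - t)

/-- `R_t(w)`: the set of admissible overlap lengths `r` at position `t`, i.e.
those `r` with `t+1 ≤ r ≤ |w|−t−1` such that `w = A·B·V·B` where `B` is the
suffix of `w` of length `t`, `V` is nonempty, and `|B·V| = r`. -/
noncomputable def Rt {α : Type*} (w : List α) (t : ℕ) : Finset ℕ :=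
  (Finset.Icc (t + 1) (w.length - t - 1)).filter fun r =>
    ∃ A V : List α, V ≠ [] ∧
      w = A ++ suffixWord w t ++ V ++ suffixWord w t ∧ t + V.length = r

/-- The deficit `Δ_t(e) = d^{D−1} − N(e;D,t)`. -/
noncomputable def deficit {d D : ℕ} (e : Edge d D) (t : ℕ) : ℝ :=
  (d : ℝ) ^ (D - 1) - (N e D t : ℝ)

/-- The total deficit `Δ(e) = ∑_{t=1}^{D} Δ_t(e)`. -/
noncomputable def totalDeficit {d D : ℕ} (e : Edge d D) : ℝ :=
  ∑ t ∈ Finset.Icc 1 D, deficit e t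

/-- The weighted overlap count
`Ω_d(e) = ∑_{j=1}^{⌈(D+1)/2⌉} ∑_{r ∈ R_j(w(e))} d^{−(r−j)}`. -/
noncomputable def Omega {d D : ℕ} (e : Edge d D) : ℝ :=
  ∑ j ∈ Finset.Icc 1 ((D + 2) / 2), ∑ r ∈ Rt e.word j, (d : ℝ) ^ ((j : ℤ) - (r : ℤ))

/-- The overlap `ov(u,v)`: the largest `j ≤ D` such that the last `j` letters
of `u` equal the first `j` letters of `v`. -/
noncomputable def ov {d D : ℕ} (u v : Vertex d D) : ℕ :=
  sSup {j | j ≤ D ∧ u.word.drop (D - j) = v.word.take j}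

end Kautz

/-!
Fix `1 ≤ t ≤ k ≤ D` and extend the edge-word `w` by `t - 1` letters on the left and `k - t`
letters on the right in all `2 ^ (k - 1)` admissible ways. Each extension `X` spells a walk of
length `k` whose `t`-th edge is `e`; it is a geodesic unless the last `D - k + q` letters of its
first vertex are the first ones of its last vertex for some `1 ≤ q ≤ k`, i.e. unless a factor of `X`
recurs at distance `q`. Such a recurrence can neither lie inside `w` (which is `7/4⁺`-power-free)
nor cover `w` (which is unbordered), so it sticks out of `w` on one side, where it prescribes
`q - t` (resp. `q - (k + 1 - t)`) letters of the extension; power-freeness of the part inside `w`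
forces `q` to be large. Summing the geometric losses,
`N(e;k,t) ≥ 2^(k-1) - 2^k 2^(k-D) (2^(-⌈t/3⌉) + 2^(-⌈(k+1-t)/3⌉))`, hence
`U_k(e) ≥ k 2^(k-1) - 6 · 2^k 2^(k-D)` and `cong(e) ≥ (D - 9) 2^D + 1`, which exceeds
`τ(2,D) = (3D - 1) 2^(D-2)` as soon as `D ≥ 35`.
-/

namespace Kautz

section Words

variable {α : Type*}

/-- The factor of `X` of length `ℓ` at position `a` occurs again at position `a + q`. -/
def RepeatsAt (X : List α) (a q ℓ : ℕ) : Prop := ∀ i < ℓ, X[a + i]? = X[a + q + i]?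

/-- The last `D - k + q` letters of `X.take D` are the first ones of `X.drop k`, so in a
Kautz digraph the ends of the walk spelled by `X` are joined by a walk of length `k - q`. -/
def ShortcutAt (D k q : ℕ) (X : List α) : Prop := RepeatsAt X (k - q) q (D - k + q)

theorem repeatsAt_iff {X : List α} {a q ℓ : ℕ} :
    RepeatsAt X a q ℓ ↔ (X.drop a).take ℓ = (X.drop (a + q)).take ℓ := by
  refine ⟨fun h => List.ext_getElem? fun i => ?_, fun h i hi => ?_⟩
  · simp only [List.getElem?_take, List.getElem?_drop]
    split_ifs with hi
    · exact h i hi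
    · rfl
  · simpa [List.getElem?_take, List.getElem?_drop, hi] using congrArg (·[i]?) h

theorem RepeatsAt.mono {X : List α} {a q ℓ b m : ℕ} (h : RepeatsAt X a q ℓ) (hab : a ≤ b)
    (hbm : b + m ≤ a + ℓ) : RepeatsAt X b q m := fun i hi => by
  have := h (b - a + i) (by omega)
  rwa [show a + (b - a + i) = b + i by omega, show a + q + (b - a + i) = b + q + i by omega]
    at this

theorem getElem?_append_append_length_add {P w s : List α} {j : ℕ} (hj : j < w.length) :
    (P ++ w ++ s)[P.length + j]? = w[j]? := by
  rw [List.append_assoc, List.getElem?_append_right (by omega), Nat.add_sub_cancel_left,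
    List.getElem?_append_left hj]

theorem RepeatsAt.of_append_append {P w s : List α} {a q ℓ : ℕ}
    (h : RepeatsAt (P ++ w ++ s) a q ℓ) (ha : P.length ≤ a)
    (hend : a + q + ℓ ≤ P.length + w.length) : RepeatsAt w (a - P.length) q ℓ := fun i hi => by
  have := h i hi
  rwa [show a + i = P.length + (a - P.length + i) by omega,
    show a + q + i = P.length + (a - P.length + q + i) by omega,
    getElem?_append_append_length_add (by omega),
    getElem?_append_append_length_add (by omega)] at this

/-- A repetition at distance `q` of a factor of length `ℓ` yields the factor `x y` with
`x` of length `q` and `y` its prefix of length `min ℓ q`, of exponent `1 + min ℓ q / q`. -/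
theorem SevenFourthsPlusFree.four_mul_le_three_mul {w : List α}
    (h74 : SevenFourthsPlusFree w) {a q ℓ : ℕ} (hq : 0 < q) (hw : a + q + ℓ ≤ w.length)
    (h : RepeatsAt w a q ℓ) : 4 * ℓ ≤ 3 * q := by
  by_contra! hlt
  set r := min ℓ q
  have hy : (w.drop a).take r = (w.drop (a + q)).take r :=
    repeatsAt_iff.mp (h.mono le_rfl (by omega))
  have hxy : (w.drop a).take q ++ (w.drop a).take r = (w.drop a).take (q + r) := by
    rw [List.take_add, List.drop_drop, hy]
  apply h74
  refine ⟨(w.drop a).take q, (w.drop a).take r, 1, ?_, le_rfl,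
    List.take_prefix_take_left (by omega), ?_, ?_⟩
  · rw [← List.length_pos_iff]; simp; omega
  · rw [List.replicate_one, List.flatten_singleton, hxy]
    exact (List.take_prefix _ _).isInfix.trans (List.drop_suffix _ _).isInfix
  · simp only [List.length_take, List.length_drop]
    omega

theorem Unbordered.not_repeatsAt_zero {w : List α} (hub : Unbordered w) {q : ℕ} (hq : 0 < q)
    (hqw : q < w.length) : ¬ RepeatsAt w 0 q (w.length - q) := fun h => by
  refine hub ⟨w.length - q, by omega, by omega, ?_⟩
  rw [Nat.sub_sub_self hqw.le]
  simpa [List.take_of_length_le] using repeatsAt_iff.mp h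

theorem isChain_append_append {R : α → α → Prop} {P w s : List α} {a b : α}
    (ha : w.head? = some a) (hb : w.getLast? = some b) (hP : (P ++ [a]).IsChain R)
    (hw : w.IsChain R) (hs : (b :: s).IsChain R) : (P ++ w ++ s).IsChain R := by
  obtain ⟨hP, -, hPa⟩ := List.isChain_append.mp hP
  obtain ⟨hbs, hs⟩ := List.isChain_cons.mp hs
  refine List.isChain_append.mpr ⟨List.isChain_append.mpr ⟨hP, hw, fun x hx y hy => ?_⟩, hs,
    fun x hx y hy => ?_⟩
  · rw [ha, Option.mem_some_iff] at hy
    exact hPa x hx y (by simp [hy])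
  · rw [List.getLast?_append, hb, Option.some_or, Option.mem_some_iff] at hx
    exact hx ▸ hbs y hy

end Words

section ChainWords

variable {α : Type*} [DecidableEq α] [Fintype α]

def chainWords : ℕ → α → Finset (List α)
  | 0, _ => {[]}
  | n + 1, a => ({a}ᶜ : Finset α).biUnion fun b => (chainWords n b).image (b :: ·)

theorem mem_chainWords {n : ℕ} {a : α} {l : List α} :
    l ∈ chainWords n a ↔ l.length = n ∧ (a :: l).IsChain (· ≠ ·) := by
  induction n generalizing a l with
  | zero => cases l <;> simp [chainWords]
  | succ n ih =>
    cases l with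
    | nil => simp [chainWords]
    | cons b l =>
      simp only [chainWords, Finset.mem_biUnion, Finset.mem_compl, Finset.mem_singleton,
        Finset.mem_image, List.cons.injEq, List.isChain_cons_cons, List.length_cons]
      constructor
      · rintro ⟨c, hca, l', hl', rfl, rfl⟩
        exact ⟨by simp [(ih.mp hl').1], Ne.symm hca, (ih.mp hl').2⟩
      · rintro ⟨hlen, hab, hch⟩
        exact ⟨b, Ne.symm hab, l, ih.mpr ⟨by omega, hch⟩, rfl, rfl⟩

theorem card_chainWords (n : ℕ) (a : α) : (chainWords n a).card = (Fintype.card α - 1) ^ n := by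
  induction n generalizing a with
  | zero => simp [chainWords]
  | succ n ih =>
    rw [chainWords, Finset.card_biUnion]
    · simp_rw [Finset.card_image_of_injective _ List.cons_injective, ih, Finset.sum_const,
        Finset.card_compl, Finset.card_singleton, smul_eq_mul, pow_succ, mul_comm]
    · intro b _ c _ hbc
      simp only [Finset.disjoint_left, Finset.mem_image]
      rintro _ ⟨l, -, rfl⟩ ⟨l', -, h⟩
      exact hbc (List.cons.inj h).1.symm

theorem card_chainWords_filter_take_le {n c : ℕ} (hc : c ≤ n) (a : α) (π : List α) :
    ((chainWords n a).filter (·.take c = π)).card ≤ (Fintype.card α - 1) ^ (n - c) := by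
  induction n generalizing a c π with
  | zero => simpa using (Finset.card_filter_le _ _).trans (card_chainWords 0 a).le
  | succ n ih =>
    rcases c with _ | c
    · exact (Finset.card_filter_le _ _).trans (card_chainWords _ a).le
    rcases π with _ | ⟨b, π⟩
    · rw [Finset.filter_false_of_mem fun l hl => by cases l <;> simp_all [mem_chainWords]]
      exact Nat.zero_le _
    calc _ ≤ (((chainWords n b).filter (·.take c = π)).image (b :: ·)).card := by
          refine Finset.card_le_card fun l hl => ?_
          obtain ⟨hl, htake⟩ := Finset.mem_filter.mp hl
          obtain ⟨hlen, hch⟩ := mem_chainWords.mp hl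
          rcases l with _ | ⟨b', l⟩
          · simp at hlen
          rw [List.take_succ_cons, List.cons.injEq] at htake
          obtain ⟨rfl, htake⟩ := htake
          refine Finset.mem_image.mpr ⟨l, Finset.mem_filter.mpr ⟨?_, htake⟩, rfl⟩
          exact mem_chainWords.mpr ⟨by simpa using hlen, (List.isChain_cons_cons.mp hch).2⟩
      _ ≤ _ := Finset.card_image_le.trans ((ih (by omega) b π).trans (by simp))

def leftChainWords (n : ℕ) (a : α) : Finset (List α) := (chainWords n a).image List.reverse

theorem mem_leftChainWords {n : ℕ} {a : α} {P : List α} :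
    P ∈ leftChainWords n a ↔ P.length = n ∧ (P ++ [a]).IsChain (· ≠ ·) := by
  rw [leftChainWords, Finset.mem_image]
  constructor
  · rintro ⟨l, hl, rfl⟩
    obtain ⟨hlen, hch⟩ := mem_chainWords.mp hl
    refine ⟨by simpa using hlen, ?_⟩
    rw [← List.reverse_cons, List.isChain_reverse]
    exact hch.imp fun _ _ h => h.symm
  · rintro ⟨hlen, hch⟩
    refine ⟨P.reverse, mem_chainWords.mpr ⟨by simpa using hlen, ?_⟩, P.reverse_reverse⟩
    rw [← List.reverse_reverse (a :: P.reverse), List.isChain_reverse]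
    simpa using hch.imp fun _ _ h => h.symm

theorem card_leftChainWords (n : ℕ) (a : α) :
    (leftChainWords n a).card = (Fintype.card α - 1) ^ n := by
  rw [leftChainWords, Finset.card_image_of_injective _ List.reverse_injective, card_chainWords]

theorem card_leftChainWords_filter_drop_le {n c : ℕ} (hc : c ≤ n) (a : α) (π : List α) :
    ((leftChainWords n a).filter (·.drop c = π)).card ≤ (Fintype.card α - 1) ^ c := by
  rw [leftChainWords, Finset.filter_image]
  refine Finset.card_image_le.trans ?_
  calc _ ≤ ((chainWords n a).filter (·.take (n - c) = π.reverse)).card := by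
        refine Finset.card_le_card fun l hl => ?_
        obtain ⟨hl, hdrop⟩ := Finset.mem_filter.mp hl
        refine Finset.mem_filter.mpr ⟨hl, ?_⟩
        rw [← hdrop, List.drop_reverse, List.reverse_reverse, (mem_chainWords.mp hl).1]
    _ ≤ _ := (card_chainWords_filter_take_le (by omega) a _).trans (by rw [Nat.sub_sub_self hc])

end ChainWords

section Sums

theorem sum_pow_le_of_injOn {r : ℝ} (hr₀ : 0 ≤ r) (hr₁ : r < 1) (S : Finset ℕ) {f : ℕ → ℕ}
    (hf : Set.InjOn f S) : ∑ q ∈ S, r ^ f q ≤ (1 - r)⁻¹ := by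
  rw [← Finset.sum_image hf, ← tsum_geometric_of_lt_one hr₀ hr₁]
  exact (summable_geometric_of_lt_one hr₀ hr₁).sum_le_tsum _ fun _ _ => pow_nonneg hr₀ _

noncomputable def tailWeight (c n q : ℕ) : ℝ := if c + n ≤ q then 2⁻¹ ^ (q - c) else 0

theorem tailWeight_nonneg (c n q : ℕ) : 0 ≤ tailWeight c n q := by
  unfold tailWeight
  split_ifs <;> positivity

theorem tailWeight_of_le {c n q : ℕ} (h : c + n ≤ q) : tailWeight c n q = 2⁻¹ ^ (q - c) :=
  if_pos h

theorem sum_tailWeight_le (S : Finset ℕ) (c n : ℕ) :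
    ∑ q ∈ S, tailWeight c n q ≤ 2 * 2⁻¹ ^ n := by
  calc ∑ q ∈ S, tailWeight c n q
      = 2⁻¹ ^ n * ∑ q ∈ S with c + n ≤ q, (2⁻¹ : ℝ) ^ (q - (c + n)) := by
        simp only [tailWeight]
        rw [← Finset.sum_filter, Finset.mul_sum]
        refine Finset.sum_congr rfl fun q hq => ?_
        rw [← pow_add, show n + (q - (c + n)) = q - c by grind]
    _ ≤ 2⁻¹ ^ n * 2 := by
        gcongr
        refine (sum_pow_le_of_injOn (by norm_num) (by norm_num) _ fun q hq q' hq' h => ?_).trans_eq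
          (by norm_num)
        simp only [Finset.coe_filter, Set.mem_ofPred_eq] at hq hq'
        omega
    _ = 2 * 2⁻¹ ^ n := mul_comm _ _

theorem sum_inv_two_pow_ceil_div_three_le (k : ℕ) :
    ∑ t ∈ Finset.Icc 1 k, (2⁻¹ : ℝ) ^ ((t + 2) / 3) ≤ 3 := by
  have blocks : ∀ V : ℕ,
      ∑ t ∈ Finset.Icc 1 (3 * V), (2⁻¹ : ℝ) ^ ((t + 2) / 3) = 3 - 3 * 2⁻¹ ^ V := by
    intro V
    induction V with
    | zero => simp
    | succ V ih =>
      rw [show 3 * (V + 1) = 3 * V + 1 + 1 + 1 by ring, Finset.sum_Icc_succ_top (by omega),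
        Finset.sum_Icc_succ_top (by omega), Finset.sum_Icc_succ_top (by omega), ih,
        show (3 * V + 1 + 2) / 3 = V + 1 by omega, show (3 * V + 1 + 1 + 2) / 3 = V + 1 by omega,
        show (3 * V + 1 + 1 + 1 + 2) / 3 = V + 1 by omega, pow_succ]
      ring
  calc _ ≤ ∑ t ∈ Finset.Icc 1 (3 * k), (2⁻¹ : ℝ) ^ ((t + 2) / 3) :=
        Finset.sum_le_sum_of_subset_of_nonneg (Finset.Icc_subset_Icc_right (by omega))
          fun _ _ _ => by positivity
    _ ≤ 3 := by rw [blocks]; linarith [show (0 : ℝ) ≤ 2⁻¹ ^ k by positivity]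

theorem sum_mul_two_pow_sub_one (n : ℕ) :
    ∑ k ∈ Finset.Icc 1 n, (k : ℝ) * 2 ^ (k - 1) = ((n : ℝ) - 1) * 2 ^ n + 1 := by
  induction n with
  | zero => simp
  | succ n ih =>
    rw [Finset.sum_Icc_succ_top (by omega), ih, Nat.add_sub_cancel]
    push_cast
    ring

theorem two_pow_eq_mul_inv_pow {m n r : ℕ} (h : m + r = n) : (2 : ℝ) ^ m = 2 ^ n * 2⁻¹ ^ r := by
  rw [← h, pow_add, mul_assoc, ← mul_pow]
  norm_num

theorem sum_two_pow_mul_inv_two_pow_le (D : ℕ) :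
    ∑ k ∈ Finset.Icc 1 D, (2 : ℝ) ^ k * 2⁻¹ ^ (D - k) ≤ 4 / 3 * 2 ^ D := by
  calc _ = 2 ^ D * ∑ k ∈ Finset.Icc 1 D, (4⁻¹ : ℝ) ^ (D - k) := by
        rw [Finset.mul_sum]
        refine Finset.sum_congr rfl fun k hk => ?_
        rw [two_pow_eq_mul_inv_pow (show k + (D - k) = D by simp at hk; omega),
          show (4⁻¹ : ℝ) = 2⁻¹ * 2⁻¹ by norm_num, mul_pow, mul_assoc]
    _ ≤ 2 ^ D * (1 - 4⁻¹)⁻¹ := by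
        gcongr
        refine sum_pow_le_of_injOn (by norm_num) (by norm_num) _ fun a ha b hb h => ?_
        simp only [Finset.coe_Icc, Set.mem_Icc] at ha hb h
        omega
    _ = _ := by norm_num; ring

theorem card_le_card_add_sum_card_filter {β ι : Type*} (S G : Finset β) (Q : Finset ι)
    (B : ι → β → Prop) (hG : ∀ x ∈ S, (∀ q ∈ Q, ¬ B q x) → x ∈ G) :
    S.card ≤ G.card + ∑ q ∈ Q, (S.filter (B q)).card := by
  classical
  calc S.card ≤ (G ∪ Q.biUnion fun q => S.filter (B q)).card := by
        refine Finset.card_le_card fun x hx => ?_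
        by_cases h : ∀ q ∈ Q, ¬ B q x
        · exact Finset.mem_union_left _ (hG x hx h)
        · obtain ⟨q, hq, hB⟩ : ∃ q ∈ Q, B q x := by simpa using h
          exact Finset.mem_union_right _
            (Finset.mem_biUnion.mpr ⟨q, hq, Finset.mem_filter.mpr ⟨hx, hB⟩⟩)
    _ ≤ _ := (Finset.card_union_le _ _).trans (Nat.add_le_add_left Finset.card_biUnion_le _)

end Sums

section Graph

variable {d D : ℕ}

theorem Vertex.ext_word {u v : Vertex d D} (h : u.word = v.word) : u = v := by
  cases u; cases v; cases h; rfl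

instance : Finite (Vertex d D) :=
  Finite.of_injective (β := List.Vector (Fin (d + 1)) D) (fun v => ⟨v.word, v.length_eq⟩)
    fun _ _ h => Vertex.ext_word (congrArg Subtype.val h)

theorem Edge.word_spec (e : Edge d D) (hD : 0 < D) :
    e.word.length = D + 1 ∧ e.word.IsChain (· ≠ ·) ∧
      e.src.word = e.word.dropLast ∧ e.tgt.word = e.word.tail := by
  obtain ⟨w, hlen, hch, hsrc, htgt⟩ := e.adj
  have : e.word = w := by
    rw [Edge.word, hsrc, htgt, List.drop_tail, List.dropLast_eq_take, hlen, Nat.add_sub_cancel,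
      show D - 1 + 1 = D by omega, List.take_append_drop]
  subst this
  exact ⟨hlen, hch, hsrc, htgt⟩

theorem Adj.drop_one_eq_take {u v : Vertex d D} (h : Adj u v) :
    u.word.drop 1 = v.word.take (D - 1) := by
  obtain ⟨w, hlen, -, hu, hv⟩ := h
  rw [hu, hv, List.dropLast_eq_take, List.drop_take, List.drop_one, hlen]
  rfl

theorem IsWalk.drop_eq_take {p : List (Vertex d D)} {x y : Vertex d D} {i : ℕ}
    (hp : IsWalk p x y) (hlen : p.length = i + 1) (hiD : i ≤ D) :
    x.word.drop i = y.word.take (D - i) := by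
  induction i generalizing p x with
  | zero =>
    obtain ⟨v, rfl⟩ := List.length_eq_one_iff.mp hlen
    obtain ⟨hx, hy, -⟩ := hp
    simp only [List.head?_cons, List.getLast?_singleton, Option.some.injEq] at hx hy
    rw [← hx, ← hy, List.drop_zero, Nat.sub_zero, List.take_of_length_le v.length_eq.le]
  | succ i ih =>
    obtain ⟨hx, hy, hch⟩ := hp
    rcases p with _ | ⟨u, _ | ⟨v, p⟩⟩
    · simp at hlen
    · simp at hlen
    obtain rfl : u = x := by simpa using hx
    have hrest : IsWalk (v :: p) v y := ⟨rfl, by simpa [List.getLast?_cons_cons] using hy,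
      (List.isChain_cons_cons.mp hch).2⟩
    rw [show i + 1 = 1 + i by omega, ← List.drop_drop,
      (List.isChain_cons_cons.mp hch).1.drop_one_eq_take,
      List.drop_take, ih hrest (by simpa using hlen) (by omega), List.take_take]
    congr 1
    omega

/-- `v₀` is a junk value, returned when `l` is not the word of a vertex. -/
noncomputable def Vertex.ofWord (v₀ : Vertex d D) (l : List (Fin (d + 1))) : Vertex d D :=
  if h : l.length = D ∧ l.IsChain (· ≠ ·) then ⟨l, h.1, h.2⟩ else v₀

theorem Vertex.word_ofWord (v₀ : Vertex d D) {l : List (Fin (d + 1))} (hlen : l.length = D)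
    (hl : l.IsChain (· ≠ ·)) : (Vertex.ofWord v₀ l).word = l := by
  rw [Vertex.ofWord, dif_pos ⟨hlen, hl⟩]

noncomputable def window (v₀ : Vertex d D) (X : List (Fin (d + 1))) (i : ℕ) : Vertex d D :=
  Vertex.ofWord v₀ ((X.drop i).take D)

variable (v₀ : Vertex d D) {X : List (Fin (d + 1))}

theorem word_window (hX : X.IsChain (· ≠ ·)) {i : ℕ} (hi : i + D ≤ X.length) :
    (window v₀ X i).word = (X.drop i).take D :=
  Vertex.word_ofWord _ (by simp; omega)
    (hX.infix ((List.take_prefix _ _).isInfix.trans (List.drop_suffix _ _).isInfix))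

theorem adj_window (hX : X.IsChain (· ≠ ·)) {i : ℕ} (hi : i + D + 1 ≤ X.length) :
    Adj (window v₀ X i) (window v₀ X (i + 1)) := by
  refine ⟨(X.drop i).take (D + 1), by simp; omega,
    hX.infix ((List.take_prefix _ _).isInfix.trans (List.drop_suffix _ _).isInfix), ?_, ?_⟩
  · rw [word_window v₀ hX (by omega), List.dropLast_eq_take, List.take_take]
    simp only [List.length_take, List.length_drop]
    congr 1
    omega
  · rw [word_window v₀ hX (by omega), ← List.drop_one, List.drop_take, List.drop_drop]
    simp

theorem isWalk_window (hX : X.IsChain (· ≠ ·)) {k : ℕ} (hlen : X.length = D + k) :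
    IsWalk ((List.range (k + 1)).map (window v₀ X)) (window v₀ X 0) (window v₀ X k) := by
  refine ⟨by simp [List.range_succ_eq_map], by simp [List.getLast?_eq_getElem?], ?_⟩
  exact (List.isChain_map _).mpr <| (List.isChain_range_succ _ _).mpr fun i hi =>
    adj_window v₀ hX (by omega)

theorem eq_of_window_eq {Y : List (Fin (d + 1))} (hX : X.IsChain (· ≠ ·))
    (hY : Y.IsChain (· ≠ ·)) {k : ℕ} (hXl : X.length = D + k) (hYl : Y.length = D + k)
    (hkD : k ≤ D) (h0 : window v₀ X 0 = window v₀ Y 0) (hk : window v₀ X k = window v₀ Y k) :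
    X = Y := by
  have h0 := congrArg Vertex.word h0
  have hk := congrArg Vertex.word hk
  rw [word_window v₀ hX (by omega), word_window v₀ hY (by omega), List.drop_zero,
    List.drop_zero] at h0
  rw [word_window v₀ hX (by omega), word_window v₀ hY (by omega),
    List.take_of_length_le (by simp; omega), List.take_of_length_le (by simp; omega)] at hk
  rw [← List.take_append_drop D X, ← List.take_append_drop D Y, h0,
    show D = k + (D - k) by omega, ← List.drop_drop, ← List.drop_drop, hk]

theorem dist_window (hX : X.IsChain (· ≠ ·)) {k : ℕ} (hlen : X.length = D + k) (hkD : k ≤ D)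
    (hno : ∀ q ∈ Finset.Icc 1 k, ¬ ShortcutAt D k q X) :
    dist (window v₀ X 0) (window v₀ X k) = k := by
  have hwalk := isWalk_window v₀ hX hlen
  refine le_antisymm (Nat.sInf_le ⟨_, hwalk, by simp⟩) (le_csInf ⟨k, _, hwalk, by simp⟩ ?_)
  rintro b ⟨p, hp, hpl⟩
  by_contra! hb
  refine hno (k - b) (Finset.mem_Icc.mpr ⟨by omega, by omega⟩) ?_
  have := hp.drop_eq_take hpl (by omega)
  rw [word_window v₀ hX (by omega), word_window v₀ hX (by omega)] at this
  rw [ShortcutAt, repeatsAt_iff, show k - (k - b) = b by omega,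
    show b + (k - b) = k by omega, show D - k + (k - b) = D - b by omega]
  simpa [List.drop_take, List.take_take] using this

theorem card_le_N (e : Edge d D) (hD : 0 < D) {k t : ℕ} (ht : 1 ≤ t) (htk : t ≤ k)
    (hkD : k ≤ D) (𝒳 : Finset (List (Fin (d + 1))))
    (h𝒳 : ∀ X ∈ 𝒳, X.IsChain (· ≠ ·) ∧ X.length = D + k ∧ (X.drop (t - 1)).take (D + 1) = e.word ∧
      ∀ q ∈ Finset.Icc 1 k, ¬ ShortcutAt D k q X) :
    𝒳.card ≤ N e k t := by
  obtain ⟨-, -, hsrc, htgt⟩ := e.word_spec hD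
  have hinj : Set.InjOn (fun X => (window e.src X 0, window e.src X k)) 𝒳 :=
    fun X hX Y hY h => eq_of_window_eq e.src (h𝒳 X hX).1 (h𝒳 Y hY).1 (h𝒳 X hX).2.1 (h𝒳 Y hY).2.1
      hkD (Prod.ext_iff.mp h).1 (Prod.ext_iff.mp h).2
  rw [N, ← Finset.card_image_of_injOn hinj, ← Set.ncard_coe_finset]
  refine Set.ncard_le_ncard fun xy hxy => ?_
  obtain ⟨X, hX, rfl⟩ := Finset.mem_image.mp hxy
  obtain ⟨hXc, hXl, hXe, hno⟩ := h𝒳 X hX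
  have hwin : ∀ i ≤ k, ((List.range (k + 1)).map (window e.src X))[i]? = some (window e.src X i) :=
    fun i hi => by simp [List.getElem?_range (show i < k + 1 by omega)]
  refine ⟨dist_window _ hXc hXl hkD hno, _, isWalk_window _ hXc hXl, by simp,
    (hwin _ (by omega)).trans (congrArg some (Vertex.ext_word ?_)),
    (hwin _ htk).trans (congrArg some (Vertex.ext_word ?_))⟩
  · rw [word_window _ hXc (by omega), hsrc, List.dropLast_eq_take, ← hXe, List.take_take]
    simp only [List.length_take, List.length_drop]
    congr 1
    omega
  · rw [word_window _ hXc (by omega), htgt, ← hXe, ← List.drop_one, List.drop_take, List.drop_drop,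
      show t = t - 1 + 1 by omega]
    simp

end Graph

section Regions

variable {α : Type*} {P w s : List α} {D k t q : ℕ}

theorem getElem?_append_append_length_add_length (j : ℕ) :
    (P ++ w ++ s)[P.length + w.length + j]? = s[j]? := by
  rw [List.getElem?_append_right (by simp)]
  simp

theorem ShortcutAt.false_of_inside (h74 : SevenFourthsPlusFree w) (hP : P.length = t - 1)
    (hw : w.length = D + 1) (hq : 0 < q) (hkD : k ≤ D) (hqt : q ≤ t) (hqk : q + t ≤ k + 1)
    (h : ShortcutAt D k q (P ++ w ++ s)) : False := by
  have := h74.four_mul_le_three_mul hq (by omega) (h.of_append_append (by omega) (by omega))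
  omega

theorem ShortcutAt.false_of_covering (hub : Unbordered w) (hP : P.length = t - 1)
    (hw : w.length = D + 1) (hq : 0 < q) (ht : 1 ≤ t) (hqk : q ≤ k) (hkD : k ≤ D) (htq : t ≤ q)
    (hkq : k + 1 ≤ q + t) (h : ShortcutAt D k q (P ++ w ++ s)) : False := by
  have := (RepeatsAt.mono h (b := t - 1) (m := D + 1 - q) (by omega) (by omega)).of_append_append
    (by omega) (by omega)
  rw [hP, Nat.sub_self, show D + 1 - q = w.length - q by omega] at this
  exact hub.not_repeatsAt_zero hq (by omega) this

/-- The repeated factor of the shortcut starts inside `w` and ends inside `s`. -/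
theorem ShortcutAt.of_right (h74 : SevenFourthsPlusFree w) (hP : P.length = t - 1)
    (hw : w.length = D + 1) (ht : 1 ≤ t) (htq : t < q) (hqk : q + t ≤ k + 1) (hkD : k ≤ D)
    (h : ShortcutAt D k q (P ++ w ++ s)) :
    4 * (D + t - k) ≤ 3 * q ∧ s.take (q - t) = (w.drop (D + 1 - q)).take (q - t) := by
  refine ⟨h74.four_mul_le_three_mul (by omega) (by omega)
    ((RepeatsAt.mono h (b := k - q) (m := D + t - k) le_rfl (by omega)).of_append_append
      (by omega) (by omega)), List.ext_getElem? fun i => ?_⟩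
  simp only [List.getElem?_take, List.getElem?_drop]
  split_ifs with hi
  · have := h (D + t - k + i) (by omega)
    rwa [show k - q + (D + t - k + i) = P.length + (D + 1 - q + i) by omega,
      show k - q + q + (D + t - k + i) = P.length + w.length + i by omega,
      getElem?_append_append_length_add (by omega), getElem?_append_append_length_add_length,
      eq_comm] at this
  · rfl

/-- The repeated factor of the shortcut starts inside `P` and ends inside `w`. -/
theorem ShortcutAt.of_left (h74 : SevenFourthsPlusFree w) (hP : P.length = t - 1)
    (hw : w.length = D + 1) (hqt : q ≤ t) (hkq : k + 1 < q + t) (htk : t ≤ k) (hkD : k ≤ D)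
    (h : ShortcutAt D k q (P ++ w ++ s)) :
    4 * (D + 1 - t) ≤ 3 * q ∧ P.drop (k - q) = (w.drop (k + 1 - t)).take (q + t - (k + 1)) := by
  have hw0 := (RepeatsAt.mono h (b := t - 1) (m := D + 1 - t) (by omega)
    (by omega)).of_append_append (by omega) (by omega)
  rw [hP, Nat.sub_self] at hw0
  refine ⟨h74.four_mul_le_three_mul (by omega) (by omega) hw0, List.ext_getElem? fun i => ?_⟩
  simp only [List.getElem?_take, List.getElem?_drop]
  split_ifs with hi
  · have := h i (by omega)
    rwa [List.append_assoc, List.getElem?_append_left (by omega),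
      show k - q + q + i = P.length + (k + 1 - t + i) by omega, ← List.append_assoc,
      getElem?_append_append_length_add (by omega)] at this
  · rw [List.getElem?_eq_none (by omega)]

end Regions

section Counting

/-- When `a` and `b` are the first and last letters of `w`, these are the pairs `(P, s)` such
that `P ++ w ++ s` has no two equal adjacent letters. -/
def extensionPairs (a b : Fin 3) (t k : ℕ) : Finset (List (Fin 3) × List (Fin 3)) :=
  leftChainWords (t - 1) a ×ˢ chainWords (k - t) b

variable {w : List (Fin 3)} {D k t q : ℕ} (a b : Fin 3)

theorem card_extensionPairs (ht : 1 ≤ t) (htk : t ≤ k) :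
    (extensionPairs a b t k).card = 2 ^ (k - 1) := by
  rw [extensionPairs, Finset.card_product, card_leftChainWords, card_chainWords, ← pow_add]
  congr 1
  omega

theorem card_filter_shortcutAt_of_right (h74 : SevenFourthsPlusFree w) (hw : w.length = D + 1)
    (ht : 1 ≤ t) (htq : t < q) (hqk : q + t ≤ k + 1) (hkD : k ≤ D) :
    ((extensionPairs a b t k).filter fun Ps => ShortcutAt D k q (Ps.1 ++ w ++ Ps.2)).card ≤
      2 ^ (t - 1) * 2 ^ (k - q) := by
  calc _ ≤ (leftChainWords (t - 1) a ×ˢ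
        (chainWords (k - t) b).filter
          (·.take (q - t) = (w.drop (D + 1 - q)).take (q - t))).card := by
        refine Finset.card_le_card fun Ps hPs => ?_
        obtain ⟨hPs, h⟩ := Finset.mem_filter.mp hPs
        obtain ⟨hP, hs⟩ := Finset.mem_product.mp hPs
        exact Finset.mem_product.mpr ⟨hP, Finset.mem_filter.mpr ⟨hs,
          (h.of_right h74 (mem_leftChainWords.mp hP).1 hw ht htq hqk hkD).2⟩⟩
    _ ≤ 2 ^ (t - 1) * 2 ^ (k - q) := by
        rw [Finset.card_product, card_leftChainWords]
        refine Nat.mul_le_mul (by simp) ((card_chainWords_filter_take_le (by omega) b _).trans ?_)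
        simp [show k - t - (q - t) = k - q by omega]

theorem card_filter_shortcutAt_of_left (h74 : SevenFourthsPlusFree w) (hw : w.length = D + 1)
    (hqt : q ≤ t) (hkq : k + 1 < q + t) (htk : t ≤ k) (hkD : k ≤ D) :
    ((extensionPairs a b t k).filter fun Ps => ShortcutAt D k q (Ps.1 ++ w ++ Ps.2)).card ≤
      2 ^ (k - q) * 2 ^ (k - t) := by
  calc _ ≤ ((leftChainWords (t - 1) a).filter
        (·.drop (k - q) = (w.drop (k + 1 - t)).take (q + t - (k + 1))) ×ˢ
          chainWords (k - t) b).card := by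
        refine Finset.card_le_card fun Ps hPs => ?_
        obtain ⟨hPs, h⟩ := Finset.mem_filter.mp hPs
        obtain ⟨hP, hs⟩ := Finset.mem_product.mp hPs
        exact Finset.mem_product.mpr ⟨Finset.mem_filter.mpr ⟨hP,
          (h.of_left h74 (mem_leftChainWords.mp hP).1 hw hqt hkq htk hkD).2⟩, hs⟩
    _ ≤ 2 ^ (k - q) * 2 ^ (k - t) := by
        rw [Finset.card_product, card_chainWords]
        exact Nat.mul_le_mul ((card_leftChainWords_filter_drop_le (by omega) a _).trans (by simp))
          (by simp)

/-- Each shortcut length `q` spoils at most a `2⁻¹ ^ (q - c)` fraction of the extensions, where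
`c` is `t` or `k + 1 - t` according to the side on which the shortcut leaves `w`; since `w` is
`7/4⁺`-power-free this happens only for large `q`. -/
theorem card_filter_shortcutAt_le (hub : Unbordered w) (h74 : SevenFourthsPlusFree w)
    (hw : w.length = D + 1) (ht : 1 ≤ t) (htk : t ≤ k) (hkD : k ≤ D) (hq : q ∈ Finset.Icc 1 k) :
    (((extensionPairs a b t k).filter fun Ps => ShortcutAt D k q (Ps.1 ++ w ++ Ps.2)).card : ℝ) ≤
      2 ^ (k - 1) * (tailWeight t (D - k + (t + 2) / 3) q +
        tailWeight (k + 1 - t) (D - k + (k + 1 - t + 2) / 3) q) := by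
  obtain ⟨hq1, hqk⟩ := Finset.mem_Icc.mp hq
  set F := (extensionPairs a b t k).filter fun Ps => ShortcutAt D k q (Ps.1 ++ w ++ Ps.2)
  have hA := tailWeight_nonneg t (D - k + (t + 2) / 3) q
  have hB := tailWeight_nonneg (k + 1 - t) (D - k + (k + 1 - t + 2) / 3) q
  rcases F.eq_empty_or_nonempty with hF | ⟨⟨P, s⟩, hPs⟩
  · rw [hF, Finset.card_empty, Nat.cast_zero]
    positivity
  obtain ⟨hPs, h⟩ := Finset.mem_filter.mp hPs
  have hP := (mem_leftChainWords.mp (Finset.mem_product.mp hPs).1).1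
  by_cases hR : q ≤ t <;> by_cases hL : q + t ≤ k + 1
  · exact (h.false_of_inside h74 hP hw hq1 hkD hR hL).elim
  · have h4 := (h.of_left h74 hP hw hR (by omega) htk hkD).1
    have hcard : (F.card : ℝ) ≤
        2 ^ (k - 1) * tailWeight (k + 1 - t) (D - k + (k + 1 - t + 2) / 3) q := by
      rw [tailWeight_of_le (by omega), ← two_pow_eq_mul_inv_pow (m := k - q + (k - t)) (by omega),
        pow_add]
      exact_mod_cast card_filter_shortcutAt_of_left a b h74 hw hR (by omega) htk hkD
    exact hcard.trans (mul_le_mul_of_nonneg_left (le_add_of_nonneg_left hA) (by positivity))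
  · have h4 := (h.of_right h74 hP hw ht (by omega) hL hkD).1
    have hcard : (F.card : ℝ) ≤ 2 ^ (k - 1) * tailWeight t (D - k + (t + 2) / 3) q := by
      rw [tailWeight_of_le (by omega), ← two_pow_eq_mul_inv_pow (m := t - 1 + (k - q)) (by omega),
        pow_add]
      exact_mod_cast card_filter_shortcutAt_of_right a b h74 hw ht (by omega) hL hkD
    exact hcard.trans (mul_le_mul_of_nonneg_left (le_add_of_nonneg_right hB) (by positivity))
  · exact (h.false_of_covering hub hP hw hq1 ht hqk hkD (by omega) (by omega)).elim

theorem sum_card_filter_shortcutAt_le (hub : Unbordered w) (h74 : SevenFourthsPlusFree w)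
    (hw : w.length = D + 1) (ht : 1 ≤ t) (htk : t ≤ k) (hkD : k ≤ D) :
    ∑ q ∈ Finset.Icc 1 k,
      (((extensionPairs a b t k).filter fun Ps => ShortcutAt D k q (Ps.1 ++ w ++ Ps.2)).card : ℝ) ≤
      2 ^ k * (2⁻¹ ^ (D - k + (t + 2) / 3) + 2⁻¹ ^ (D - k + (k + 1 - t + 2) / 3)) := by
  calc _ ≤ ∑ q ∈ Finset.Icc 1 k, 2 ^ (k - 1) * (tailWeight t (D - k + (t + 2) / 3) q +
        tailWeight (k + 1 - t) (D - k + (k + 1 - t + 2) / 3) q) :=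
        Finset.sum_le_sum fun q hq => card_filter_shortcutAt_le a b hub h74 hw ht htk hkD hq
    _ ≤ 2 ^ (k - 1) * (2 * 2⁻¹ ^ (D - k + (t + 2) / 3) +
        2 * 2⁻¹ ^ (D - k + (k + 1 - t + 2) / 3)) := by
        rw [← Finset.mul_sum, Finset.sum_add_distrib]
        gcongr <;> exact sum_tailWeight_le _ _ _
    _ = _ := by
        rw [show k = k - 1 + 1 by omega, pow_succ, Nat.add_sub_cancel]
        ring

/-- Each extension spells a walk whose `t`-th edge is `e`, and a geodesic if it has no
shortcut. -/
theorem card_filter_forall_not_shortcutAt_le_N (e : Edge 2 D) (hD : 0 < D)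
    (ha : e.word.head? = some a) (hb : e.word.getLast? = some b) (ht : 1 ≤ t) (htk : t ≤ k)
    (hkD : k ≤ D) :
    ((extensionPairs a b t k).filter fun Ps =>
      ∀ q ∈ Finset.Icc 1 k, ¬ ShortcutAt D k q (Ps.1 ++ e.word ++ Ps.2)).card ≤ N e k t := by
  obtain ⟨hw, hwc, -, -⟩ := e.word_spec hD
  set good := (extensionPairs a b t k).filter fun Ps =>
    ∀ q ∈ Finset.Icc 1 k, ¬ ShortcutAt D k q (Ps.1 ++ e.word ++ Ps.2)
  have hmem : ∀ Ps ∈ good, (Ps.1.length = t - 1 ∧ (Ps.1 ++ [a]).IsChain (· ≠ ·)) ∧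
      (Ps.2.length = k - t ∧ (b :: Ps.2).IsChain (· ≠ ·)) ∧
      ∀ q ∈ Finset.Icc 1 k, ¬ ShortcutAt D k q (Ps.1 ++ e.word ++ Ps.2) := fun Ps hPs => by
    simpa only [good, Finset.mem_filter, extensionPairs, Finset.mem_product, mem_leftChainWords,
      mem_chainWords, and_assoc] using hPs
  have hinj : Set.InjOn (fun Ps : List (Fin 3) × List (Fin 3) => Ps.1 ++ e.word ++ Ps.2) good := by
    intro Ps hPs Ps' hPs' h
    obtain ⟨h1, h2⟩ := List.append_inj (by simpa using h)
      ((hmem Ps hPs).1.1.trans (hmem Ps' hPs').1.1.symm)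
    exact Prod.ext h1 (List.append_cancel_left h2)
  rw [← Finset.card_image_of_injOn hinj]
  refine card_le_N e hD ht htk hkD _ fun X hX => ?_
  obtain ⟨⟨P, s⟩, hPs, rfl⟩ := Finset.mem_image.mp hX
  obtain ⟨⟨hP, hPc⟩, ⟨hs, hsc⟩, hno⟩ := hmem _ hPs
  refine ⟨isChain_append_append ha hb hPc hwc hsc, by simp [hP, hs, hw]; omega, ?_, hno⟩
  rw [List.append_assoc, List.drop_left' hP, List.take_left' hw]

theorem N_lower_bound (e : Edge 2 D) (hD : 0 < D) (hub : Unbordered e.word)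
    (h74 : SevenFourthsPlusFree e.word) (ht : 1 ≤ t) (htk : t ≤ k) (hkD : k ≤ D) :
    (2 : ℝ) ^ (k - 1) ≤
      N e k t + 2 ^ k * (2⁻¹ ^ (D - k + (t + 2) / 3) + 2⁻¹ ^ (D - k + (k + 1 - t + 2) / 3)) := by
  obtain ⟨hw, -, -, -⟩ := e.word_spec hD
  have hne : e.word ≠ [] := List.ne_nil_of_length_pos (by omega)
  obtain ⟨a, ha⟩ : ∃ a, e.word.head? = some a := ⟨_, List.head?_eq_some_head hne⟩
  obtain ⟨b, hb⟩ : ∃ b, e.word.getLast? = some b := ⟨_, List.getLast?_eq_some_getLast hne⟩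
  have hsplit := (card_le_card_add_sum_card_filter _ _ (Finset.Icc 1 k) _ fun Ps hPs hno => by
    simpa only [Finset.mem_filter] using And.intro hPs hno).trans
    (Nat.add_le_add_right (card_filter_forall_not_shortcutAt_le_N a b e hD ha hb ht htk hkD) _)
  have hreal := (Nat.cast_le (α := ℝ)).mpr hsplit
  rw [card_extensionPairs a b ht htk] at hreal
  push_cast at hreal
  linarith [sum_card_filter_shortcutAt_le a b hub h74 hw ht htk hkD]

theorem U_lower_bound (e : Edge 2 D) (hD : 0 < D) (hub : Unbordered e.word)
    (h74 : SevenFourthsPlusFree e.word) (hkD : k ≤ D) :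
    (k : ℝ) * 2 ^ (k - 1) - 6 * (2 ^ k * 2⁻¹ ^ (D - k)) ≤ U e k := by
  have hreflect : ∑ t ∈ Finset.Icc 1 k, (2⁻¹ : ℝ) ^ ((k + 1 - t + 2) / 3) =
      ∑ t ∈ Finset.Icc 1 k, (2⁻¹ : ℝ) ^ ((t + 2) / 3) :=
    Finset.sum_nbij' (fun t => k + 1 - t) (fun t => k + 1 - t) (by simp; omega) (by simp; omega)
      (by simp; omega) (by simp; omega) fun _ _ => rfl
  have herr : ∑ t ∈ Finset.Icc 1 k,
      (2 : ℝ) ^ k * (2⁻¹ ^ (D - k + (t + 2) / 3) + 2⁻¹ ^ (D - k + (k + 1 - t + 2) / 3)) ≤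
      6 * (2 ^ k * 2⁻¹ ^ (D - k)) := by
    calc _ = 2 ^ k * 2⁻¹ ^ (D - k) * (∑ t ∈ Finset.Icc 1 k, (2⁻¹ : ℝ) ^ ((t + 2) / 3) +
          ∑ t ∈ Finset.Icc 1 k, (2⁻¹ : ℝ) ^ ((k + 1 - t + 2) / 3)) := by
          rw [← Finset.sum_add_distrib, Finset.mul_sum]
          exact Finset.sum_congr rfl fun t _ => by rw [pow_add, pow_add]; ring
      _ ≤ 2 ^ k * 2⁻¹ ^ (D - k) * (3 + 3) := by
          rw [hreflect]
          gcongr <;> exact sum_inv_two_pow_ceil_div_three_le k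
      _ = _ := by ring
  have hsum := Finset.sum_le_sum fun t ht =>
    N_lower_bound e hD hub h74 (Finset.mem_Icc.mp ht).1 (Finset.mem_Icc.mp ht).2 hkD
  rw [Finset.sum_add_distrib, Finset.sum_const, Nat.card_Icc, Nat.add_sub_cancel, nsmul_eq_mul]
    at hsum
  have hU : (U e k : ℝ) = ∑ t ∈ Finset.Icc 1 k, (N e k t : ℝ) := by
    rw [U]
    push_cast
    rfl
  linarith

end Counting

theorem tau_two_lt {D : ℕ} (hD : 35 ≤ D) : (tau 2 D : ℝ) < ((D : ℝ) - 9) * 2 ^ D + 1 := by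
  obtain ⟨m, rfl⟩ : ∃ m, D = m + 2 := ⟨D - 2, by omega⟩
  have hm : (33 : ℝ) ≤ m := by exact_mod_cast (show 33 ≤ m by omega)
  have h2 : (0 : ℝ) < 2 ^ m := by positivity
  rw [tau, show m + 2 - 1 = m + 1 by omega, Nat.add_sub_cancel]
  push_cast
  rw [pow_succ, pow_add]
  nlinarith

end Kautz

theorem statement3_general (D : ℕ) (hD : 35 ≤ D) (e : Kautz.Edge 2 D)
    (hub : Kautz.Unbordered e.word)
    (h74 : Kautz.SevenFourthsPlusFree e.word) :
    Kautz.tau 2 D < Kautz.cong e := by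
  have hcong : ((D : ℝ) - 1) * 2 ^ D + 1 - 6 * (4 / 3 * 2 ^ D) ≤ Kautz.cong e := by
    calc _ ≤ ∑ k ∈ Finset.Icc 1 D, ((k : ℝ) * 2 ^ (k - 1) - 6 * (2 ^ k * 2⁻¹ ^ (D - k))) := by
          rw [Finset.sum_sub_distrib, Kautz.sum_mul_two_pow_sub_one, ← Finset.mul_sum]
          gcongr
          exact Kautz.sum_two_pow_mul_inv_two_pow_le D
      _ ≤ ∑ k ∈ Finset.Icc 1 D, (Kautz.U e k : ℝ) := Finset.sum_le_sum fun k hk =>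
          Kautz.U_lower_bound e (by omega) hub h74 (Finset.mem_Icc.mp hk).2
      _ = Kautz.cong e := by
          rw [Kautz.cong]
          push_cast
          rfl
  have := (Kautz.tau_two_lt hD).trans_le (by linarith : _ ≤ (Kautz.cong e : ℝ))
  exact_mod_cast this

/-- Let `D ≥ 35` and let `e` be a directed edge of `K(2,D)` whose edge-word is
an unbordered `7/4⁺`-power-free ternary word of length `D+1`.
Then `cong(e) > τ(2,D)`. -/
theorem statement3 (D : ℕ) (hD : 35 ≤ D) (e : Kautz.Edge 2 D)
    (hlen : e.word.length = D + 1)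
    (hub : Kautz.Unbordered e.word)
    (h74 : Kautz.SevenFourthsPlusFree e.word)
    (htern : Kautz.IsTernary e.word) :
    Kautz.tau 2 D < Kautz.cong e :=
  statement3_general D hD e hub h74
end

section
/- Let d ≥ 2, D ≥ 2, and let e be any directed edge of the Kautz digraph K(d,D). Then U_{D−1}(e) ≥ ((D−1)/(d·D))·U_D(e). -/
open scoped BigOperators Classical

/-!
If `(x, y)` is at distance `k + 1` and its geodesic uses `e` as its `t`-th edge, deleting the first
vertex of the geodesic leaves a pair at distance `k` whose geodesic uses `e` as its `(t - 1)`-st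
edge (when `t ≥ 2`), and deleting the last vertex leaves one using `e` as its `t`-th edge (when
`t ≤ k`). Every vertex has at most `d` in- and out-neighbours, so both trimmings are at most
`d`-to-one: `N(e;k+1,t) ≤ d·N(e;k,t-1)` and `N(e;k+1,t) ≤ d·N(e;k,t)`. Weighting the first bound
by `t - 1`, the second by `k + 1 - t`, and summing over `t`, each `N(e;k,s)` receives total weight
`d·(k + 1)`; hence `k·U_{k+1}(e) ≤ d·(k + 1)·U_k(e)`, and `k = D - 1` is the claim.
-/

theorem Set.ncard_le_mul_ncard_of_forall_exists {α β : Type*} [Finite α] [Finite β]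
    {s : Set α} {t : Set β} (r : α → β → Prop) {n : ℕ} (hs : ∀ a ∈ s, ∃ b ∈ t, r a b)
    (ht : ∀ b ∈ t, {a ∈ s | r a b}.ncard ≤ n) : s.ncard ≤ n * t.ncard := by
  classical
  have := Fintype.ofFinite α
  have := Fintype.ofFinite β
  have key := Finset.card_mul_le_card_mul r (s := s.toFinset) (t := t.toFinset) (m := 1) (n := n)
    (fun a ha => by
      obtain ⟨b, hb, hab⟩ := hs a (Set.mem_toFinset.1 ha)
      exact Finset.one_le_card.2 ⟨b, (Finset.mem_bipartiteAbove r).2 ⟨Set.mem_toFinset.2 hb, hab⟩⟩)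
    (fun b hb => by
      rw [← Set.ncard_coe_finset, Finset.coe_bipartiteBelow]
      simpa only [Set.mem_toFinset] using ht b (Set.mem_toFinset.1 hb))
  rwa [mul_one, ← Set.ncard_eq_toFinset_card', ← Set.ncard_eq_toFinset_card', mul_comm] at key

namespace Kautz

variable {d D : ℕ}

theorem Vertex.word_injective : Function.Injective (Vertex.word : Vertex d D → _) := by
  rintro ⟨⟩ ⟨⟩ rfl
  rfl

instance inst_s6 : Finite (Vertex d D) :=
  Finite.of_injective (β := List.Vector (Fin (d+1)) D) (fun v => ⟨v.word, v.length_eq⟩)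
    fun _ _ h => Vertex.word_injective (congrArg Subtype.val h)

theorem ncard_compl_singleton_fin (c : Fin (d + 1)) : ({c}ᶜ : Set (Fin (d + 1))).ncard = d := by
  rw [Set.ncard_compl _, Set.ncard_singleton, Nat.card_eq_fintype_card, Fintype.card_fin,
    Nat.add_sub_cancel]

theorem ncard_inNeighbors_le (hD : 1 ≤ D) (v : Vertex d D) : {u | Adj u v}.ncard ≤ d := by
  obtain ⟨c, l, hv⟩ := List.exists_cons_of_length_pos (l := v.word) (by rw [v.length_eq]; omega)
  have shape : ∀ u, Adj u v → ∃ a, a ≠ c ∧ u.word = a :: (c :: l).dropLast := by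
    rintro u ⟨w, -, hw, hu, hwv⟩
    rcases w with _ | ⟨a, r⟩
    · simp [hv] at hwv
    · rw [hv, List.tail_cons] at hwv
      subst hwv
      exact ⟨a, (List.isChain_cons_cons.1 hw).1, by rw [hu, List.dropLast_cons_cons]⟩
  refine (Set.ncard_le_ncard_of_injOn (t := {c}ᶜ) (fun u => u.word.headD c) ?_ ?_).trans
    (ncard_compl_singleton_fin c).le
  · intro u hu
    obtain ⟨a, ha, hu⟩ := shape u hu
    simpa [hu] using ha
  · intro u₁ h₁ u₂ h₂ h
    obtain ⟨a₁, -, hu₁⟩ := shape u₁ h₁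
    obtain ⟨a₂, -, hu₂⟩ := shape u₂ h₂
    simp only [hu₁, hu₂, List.headD_cons] at h
    exact Vertex.word_injective (by rw [hu₁, hu₂, h])

theorem ncard_outNeighbors_le (hD : 1 ≤ D) (u : Vertex d D) : {v | Adj u v}.ncard ≤ d := by
  obtain ⟨l, c, hu⟩ := (List.eq_nil_or_concat' u.word).resolve_left
    (List.ne_nil_of_length_pos (by rw [u.length_eq]; omega))
  have shape : ∀ v, Adj u v → ∃ b, b ≠ c ∧ v.word = (l ++ [c]).tail ++ [b] := by
    rintro v ⟨w, -, hw, huw, hv⟩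
    obtain rfl | ⟨r, b, rfl⟩ := List.eq_nil_or_concat' w
    · simp [hu] at huw
    · rw [List.dropLast_concat, hu] at huw
      subst huw
      refine ⟨b, fun hb => ?_, by rw [hv, List.tail_append_of_ne_nil (by simp)]⟩
      exact List.isChain_append.1 hw |>.2.2 c (by simp) b (by simp) hb.symm
  refine (Set.ncard_le_ncard_of_injOn (t := {c}ᶜ) (fun v => v.word.getLastD c) ?_ ?_).trans
    (ncard_compl_singleton_fin c).le
  · intro v hv
    obtain ⟨b, hb, hv⟩ := shape v hv
    simpa [hv] using hb
  · intro v₁ h₁ v₂ h₂ h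
    obtain ⟨b₁, -, hv₁⟩ := shape v₁ h₁
    obtain ⟨b₂, -, hv₂⟩ := shape v₂ h₂
    simp only [hv₁, hv₂, List.getLastD_concat] at h
    exact Vertex.word_injective (by rw [hv₁, hv₂, h])

theorem isWalk_iff {p : List (Vertex d D)} {x y : Vertex d D} :
    IsWalk p x y ↔ p.head? = some x ∧ p.getLast? = some y ∧ p.IsChain Adj :=
  Iff.rfl

theorem isWalk_singleton {a x y : Vertex d D} : IsWalk [a] x y ↔ a = x ∧ a = y := by
  simp [isWalk_iff]

theorem isWalk_append {p q : List (Vertex d D)} {x y : Vertex d D} (hp : p ≠ []) (hq : q ≠ []) :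
    IsWalk (p ++ q) x y ↔ ∃ u v, IsWalk p x u ∧ Adj u v ∧ IsWalk q v y := by
  simp only [isWalk_iff, List.head?_append_of_ne_nil _ hp, List.getLast?_append_of_ne_nil _ hq,
    List.isChain_append]
  constructor
  · rintro ⟨hx, hy, hcp, hcq, hpq⟩
    have hu := List.getLast?_eq_some_getLast hp
    have hv := List.head?_eq_some_head hq
    exact ⟨p.getLast hp, q.head hq, ⟨hx, hu, hcp⟩, hpq _ hu _ hv, hv, hy, hcq⟩
  · rintro ⟨u, v, ⟨hx, hu, hcp⟩, huv, hv, hy, hcq⟩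
    refine ⟨hx, hy, hcp, hcq, fun a ha b hb => ?_⟩
    rw [hu, Option.mem_some_iff] at ha
    rw [hv, Option.mem_some_iff] at hb
    exact ha ▸ hb ▸ huv

theorem IsWalk.ne_nil {p : List (Vertex d D)} {x y : Vertex d D} (h : IsWalk p x y) : p ≠ [] := by
  rintro rfl
  simp [isWalk_iff] at h

theorem dist_le_of_isWalk {p : List (Vertex d D)} {x y : Vertex d D} {k : ℕ}
    (h : IsWalk p x y) (hp : p.length = k + 1) : dist x y ≤ k :=
  Nat.sInf_le ⟨p, h, hp⟩

theorem exists_isWalk_length_eq_dist {p : List (Vertex d D)} {x y : Vertex d D}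
    (h : IsWalk p x y) : ∃ q, IsWalk q x y ∧ q.length = dist x y + 1 :=
  Nat.sInf_mem (s := {k | ∃ q, IsWalk q x y ∧ q.length = k + 1})
    ⟨p.length - 1, p, h, by have := List.length_pos_iff.2 h.ne_nil; omega⟩

theorem dist_self (x : Vertex d D) : dist x x = 0 :=
  Nat.le_zero.1 (dist_le_of_isWalk (p := [x]) (isWalk_singleton.2 ⟨rfl, rfl⟩) rfl)

theorem dist_le_dist_add_dist_of_adj {p q : List (Vertex d D)} {x u v y : Vertex d D}
    (hp : IsWalk p x u) (huv : Adj u v) (hq : IsWalk q v y) :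
    dist x y ≤ dist x u + dist v y + 1 := by
  obtain ⟨p', hp', hp'len⟩ := exists_isWalk_length_eq_dist hp
  obtain ⟨q', hq', hq'len⟩ := exists_isWalk_length_eq_dist hq
  refine dist_le_of_isWalk ((isWalk_append hp'.ne_nil hq'.ne_nil).2 ⟨u, v, hp', huv, hq'⟩) ?_
  rw [List.length_append, hp'len, hq'len]
  ring

def pairsThrough (e : Edge d D) (k t : ℕ) : Set (Vertex d D × Vertex d D) :=
  {xy | dist xy.1 xy.2 = k ∧ ∃ p : List (Vertex d D), IsWalk p xy.1 xy.2 ∧ p.length = k + 1 ∧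
    p[t-1]? = some e.src ∧ p[t]? = some e.tgt}

theorem N_eq_ncard_pairsThrough (e : Edge d D) (k t : ℕ) :
    N e k t = (pairsThrough e k t).ncard :=
  rfl

theorem exists_adj_left_mem_pairsThrough {e : Edge d D} {k t : ℕ} {x y : Vertex d D}
    (h : (x, y) ∈ pairsThrough e (k + 1) (t + 1)) (ht : 1 ≤ t) :
    ∃ x', Adj x x' ∧ (x', y) ∈ pairsThrough e k t := by
  obtain ⟨hdist, p, hp, hlen, hsrc, htgt⟩ := h
  obtain ⟨s, rfl⟩ : ∃ s, t = s + 1 := ⟨t - 1, by omega⟩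
  obtain ⟨a, q, rfl⟩ := List.exists_cons_of_length_pos (l := p) (by omega)
  have hqlen : q.length = k + 1 := by simpa using hlen
  have hq_ne : q ≠ [] := List.ne_nil_of_length_pos (by omega)
  obtain ⟨u, x', hu, hux', hq⟩ := (isWalk_append (List.cons_ne_nil a []) hq_ne).1 hp
  obtain ⟨rfl, rfl⟩ := isWalk_singleton.1 hu
  have hle : dist x' y ≤ k := dist_le_of_isWalk hq hqlen
  have hge : k + 1 ≤ dist x' y + 1 := by
    simpa [dist_self, hdist] using dist_le_dist_add_dist_of_adj hu hux' hq
  refine ⟨x', hux', (le_antisymm hle (by omega) : dist x' y = k), q, hq, hqlen, ?_, ?_⟩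
  · simpa using hsrc
  · simpa using htgt

theorem exists_adj_right_mem_pairsThrough {e : Edge d D} {k t : ℕ} {x y : Vertex d D}
    (h : (x, y) ∈ pairsThrough e (k + 1) t) (ht : t ≤ k) :
    ∃ y', Adj y' y ∧ (x, y') ∈ pairsThrough e k t := by
  obtain ⟨hdist, p, hp, hlen, hsrc, htgt⟩ := h
  obtain rfl | ⟨q, b, rfl⟩ := List.eq_nil_or_concat' p
  · simp at hlen
  have hqlen : q.length = k + 1 := by simpa using hlen
  have hq_ne : q ≠ [] := List.ne_nil_of_length_pos (by omega)
  obtain ⟨y', v, hq, hy'v, hv⟩ := (isWalk_append hq_ne (List.cons_ne_nil b [])).1 hp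
  obtain ⟨rfl, rfl⟩ := isWalk_singleton.1 hv
  have hle : dist x y' ≤ k := dist_le_of_isWalk hq hqlen
  have hge : k + 1 ≤ dist x y' + 1 := by
    simpa [dist_self, hdist] using dist_le_dist_add_dist_of_adj hq hy'v hv
  refine ⟨y', hy'v, (le_antisymm hle (by omega) : dist x y' = k), q, hq, hqlen, ?_, ?_⟩
  · rwa [List.getElem?_append_left (by omega)] at hsrc
  · rwa [List.getElem?_append_left (by omega)] at htgt

theorem N_succ_succ_le (hD : 1 ≤ D) (e : Edge d D) {k t : ℕ} (ht : 1 ≤ t) :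
    N e (k + 1) (t + 1) ≤ d * N e k t := by
  rw [N_eq_ncard_pairsThrough, N_eq_ncard_pairsThrough]
  refine Set.ncard_le_mul_ncard_of_forall_exists (fun z b => Adj z.1 b.1 ∧ z.2 = b.2)
    (fun z hz => ?_) (fun b _ => ?_)
  · obtain ⟨x', hadj, hmem⟩ := exists_adj_left_mem_pairsThrough hz ht
    exact ⟨(x', z.2), hmem, hadj, rfl⟩
  · refine (Set.ncard_le_ncard_of_injOn Prod.fst (fun z hz => hz.2.1) ?_).trans
      (ncard_inNeighbors_le hD b.1)
    exact fun z₁ h₁ z₂ h₂ h => Prod.ext h (h₁.2.2.trans h₂.2.2.symm)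

theorem N_succ_le (hD : 1 ≤ D) (e : Edge d D) {k t : ℕ} (ht : t ≤ k) :
    N e (k + 1) t ≤ d * N e k t := by
  rw [N_eq_ncard_pairsThrough, N_eq_ncard_pairsThrough]
  refine Set.ncard_le_mul_ncard_of_forall_exists (fun z b => z.1 = b.1 ∧ Adj b.2 z.2)
    (fun z hz => ?_) (fun b _ => ?_)
  · obtain ⟨y', hadj, hmem⟩ := exists_adj_right_mem_pairsThrough hz ht
    exact ⟨(z.1, y'), hmem, rfl, hadj⟩
  · refine (Set.ncard_le_ncard_of_injOn Prod.snd (fun z hz => hz.2.2) ?_).trans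
      (ncard_outNeighbors_le hD b.2)
    exact fun z₁ h₁ z₂ h₂ h => Prod.ext (h₁.2.1.trans h₂.2.1.symm) h

theorem U_eq_sum_range (e : Edge d D) (k : ℕ) :
    U e k = ∑ i ∈ Finset.range k, N e k (i + 1) := by
  rw [U, Finset.range_eq_Ico, Finset.sum_Ico_add', zero_add, Finset.Ico_add_one_right_eq_Icc]

theorem mul_U_succ_le (hD : 1 ≤ D) (e : Edge d D) (k : ℕ) :
    k * U e (k + 1) ≤ d * (k + 1) * U e k := by
  rw [U_eq_sum_range, U_eq_sum_range, Finset.mul_sum, Finset.mul_sum]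
  calc ∑ i ∈ Finset.range (k + 1), k * N e (k + 1) (i + 1)
      = ∑ i ∈ Finset.range (k + 1),
          (i * N e (k + 1) (i + 1) + (k - i) * N e (k + 1) (i + 1)) := by
        refine Finset.sum_congr rfl fun i hi => ?_
        rw [← add_mul, Nat.add_sub_cancel' (Nat.lt_succ_iff.1 (Finset.mem_range.1 hi))]
    _ = ∑ i ∈ Finset.range k,
          ((i + 1) * N e (k + 1) (i + 1 + 1) + (k - i) * N e (k + 1) (i + 1)) := by
        rw [Finset.sum_add_distrib, Finset.sum_range_succ', Finset.sum_range_succ,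
          Finset.sum_add_distrib]
        simp
    _ ≤ ∑ i ∈ Finset.range k,
          ((i + 1) * (d * N e k (i + 1)) + (k - i) * (d * N e k (i + 1))) := by
        gcongr with i hi
        · exact N_succ_succ_le hD e (Nat.le_add_left 1 i)
        · exact N_succ_le hD e (Finset.mem_range.1 hi)
    _ = ∑ i ∈ Finset.range k, d * (k + 1) * N e k (i + 1) := by
        refine Finset.sum_congr rfl fun i hi => ?_
        rw [← add_mul, Nat.add_right_comm, Nat.add_sub_cancel' (Finset.mem_range.1 hi).le]
        ring

end Kautz

theorem statement6_general (d D : ℕ) (hD : 2 ≤ D) (e : Kautz.Edge d D) :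
    (((D : ℝ) - 1) / ((d : ℝ) * (D : ℝ))) * (Kautz.U e D : ℝ)
      ≤ (Kautz.U e (D - 1) : ℝ) := by
  have key := Kautz.mul_U_succ_le (by omega) e (D - 1)
  rw [Nat.sub_add_cancel (by omega)] at key
  have hcast : ((D - 1 : ℕ) : ℝ) = (D : ℝ) - 1 := by rw [Nat.cast_sub (by omega), Nat.cast_one]
  rw [div_mul_eq_mul_div, ← hcast]
  refine div_le_of_le_mul₀ (by positivity) (by positivity) ?_
  exact_mod_cast key.trans_eq (mul_comm _ _)

/-- Trimming inequality: for `d ≥ 2`, `D ≥ 2` and any directed edge `e` of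
`K(d,D)`, `U_{D−1}(e) ≥ ((D−1)/(d·D))·U_D(e)`. -/
theorem statement6 (d D : ℕ) (hd : 2 ≤ d) (hD : 2 ≤ D) (e : Kautz.Edge d D) :
    (((D : ℝ) - 1) / ((d : ℝ) * (D : ℝ))) * (Kautz.U e D : ℝ)
      ≤ (Kautz.U e (D - 1) : ℝ) :=
  statement6_general d D hD e
end

section
/- Let e be a directed edge of K(2,D) with edge-word w(e) = a_0a_1⋯a_D, and let t, r be integers with 1 ≤ t, 2 ≤ r ≤ D, 2t ≤ D+1, and t + r > D+1. Suppose W = w_0w_1⋯w_{2D−1} is a word of length 2D such that w_{t−1}w_t⋯w_{D+t−1} = a_0a_1⋯a_D and w_{D−r+i} = w_{D+i} for all 0 ≤ i ≤ r−1. Then w(e) has a border; i.e., w(e) is not unbordered. -/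
open scoped BigOperators Classical

/-- Case A is impossible for unbordered edge-words: if `e` is a directed edge
of `K(2,D)` with edge-word `a₀a₁⋯a_D`, and `t, r` satisfy `1 ≤ t`,
`2 ≤ r ≤ D`, `2t ≤ D+1`, `t + r > D+1`, and `W = w₀⋯w_{2D−1}` is a word of
length `2D` whose window `w_{t−1}⋯w_{D+t−1}` equals the edge-word and which
satisfies `w_{D−r+i} = w_{D+i}` for all `0 ≤ i ≤ r−1`, then the edge-word has
a border. -/
theorem statement10 (D : ℕ) (e : Kautz.Edge 2 D) (t r : ℕ)
    (ht1 : 1 ≤ t) (hr2 : 2 ≤ r) (hrD : r ≤ D)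
    (htD : 2 * t ≤ D + 1) (htr : D + 1 < t + r)
    (W : List (Fin 3)) (hWlen : W.length = 2 * D)
    (hwin : ∀ i ≤ D, W[t - 1 + i]? = (Kautz.Edge.word e)[i]?)
    (hov : ∀ i < r, W[D - r + i]? = W[D + i]?) :
    Kautz.HasBorder (Kautz.Edge.word e) := by
  have hD : 2 ≤ D := le_trans hr2 hrD
  have ha : (Kautz.Edge.word e).length = D + 1 := by
    simp [Kautz.Edge.word, e.src.length_eq, e.tgt.length_eq]
    omega
  refine ⟨D + 1 - r, by omega, by omega, ?_⟩
  rw [ha]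
  have hrr : D + 1 - (D + 1 - r) = r := by omega
  rw [hrr]
  apply List.ext_getElem?
  intro i
  by_cases hi : i < D + 1 - r
  · rw [List.getElem?_take, if_pos hi, List.getElem?_drop]
    have h1 := hwin i (by omega)
    have h2 := hwin (r + i) (by omega)
    have h3 := hov (t + r - D - 1 + i) (by omega)
    have e1 : D - r + (t + r - D - 1 + i) = t - 1 + i := by omega
    have e2 : D + (t + r - D - 1 + i) = t - 1 + (r + i) := by omega
    rw [e1, e2] at h3
    rw [← h1, ← h2, h3]
  · have hn1 : ((Kautz.Edge.word e).take (D + 1 - r))[i]? = none := by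
      rw [List.getElem?_eq_none]
      simp [List.length_take, ha]
      omega
    have hn2 : ((Kautz.Edge.word e).drop r)[i]? = none := by
      rw [List.getElem?_eq_none]
      simp [List.length_drop, ha]
      omega
    rw [hn1, hn2]
end

section
/- Let w be a square-free word of length n and let t ≥ 1 be an integer. If r and r' are distinct elements of R_t(w), then |r − r'| ≥ t + 1. In particular, R_t(w) contains no two consecutive integers. -/
open scoped BigOperators Classical

lemma aux_square_of_shift {α : Type*} (S : List α) (δ t : ℕ) (hδ : 1 ≤ δ)
    (hδt : δ ≤ t) (hlen : δ ≤ S.length)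
    (hEq : S.take t = (S.drop δ).take t) :
    ∃ X : List α, X ≠ [] ∧ (X ++ X) <+: S := by
  refine ⟨S.take δ, ?_, ?_⟩
  · have : (S.take δ).length = δ := by
      rw [List.length_take]; omega
    intro h
    rw [h] at this
    simp at this
    omega
  · have h1 : S.take δ = (S.drop δ).take δ := by
      have := congrArg (List.take δ) hEq
      simpa [List.take_take, Nat.min_eq_left hδt] using this
    have h2 : S.take (δ + δ) = S.take δ ++ (S.drop δ).take δ := List.take_add ..
    rw [← h1] at h2
    exact ⟨S.drop (δ + δ), by rw [← h2, List.take_append_drop]⟩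

lemma aux_sep {α : Type*} (w : List α) (t : ℕ)
    (hsf : Kautz.SquareFree w) (ht : 1 ≤ t)
    (r r' : ℕ) (hr : r ∈ Kautz.Rt w t) (hr' : r' ∈ Kautz.Rt w t)
    (hlt : r < r') : t + 1 ≤ r' - r := by
  simp only [Kautz.Rt, Finset.mem_filter, Finset.mem_Icc] at hr hr'
  obtain ⟨⟨hr1, hr2⟩, A, V, hVne, hw, hrV⟩ := hr
  obtain ⟨⟨hr'1, hr'2⟩, A', V', _, hw', hr'V⟩ := hr'
  set B := Kautz.suffixWord w t with hB
  have hwn : t + 1 ≤ w.length - t - 1 := le_trans hr1 hr2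
  have hlenw : 2 * t + 2 ≤ w.length := by omega
  have hBlen : B.length = t := by
    simp [hB, Kautz.suffixWord]; omega
  have hAlen : A.length = w.length - (r + t) := by
    have := congrArg List.length hw
    simp [hBlen] at this
    omega
  have hA'len : A'.length = w.length - (r' + t) := by
    have := congrArg List.length hw'
    simp [hBlen] at this
    omega
  set δ := r' - r with hδ
  by_contra hcon
  push_neg at hcon
  have hδ1 : 1 ≤ δ := by omega
  have hδt : δ ≤ t := by omega
  -- the suffixes of length r+t and r'+t
  have hS' : w.drop (w.length - (r + t)) = B ++ V ++ B := by
    rw [← hAlen]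
    conv_lhs => rw [hw]
    rw [List.append_assoc, List.append_assoc, List.drop_left, ← List.append_assoc]
  have hS : w.drop (w.length - (r' + t)) = B ++ V' ++ B := by
    rw [← hA'len]
    conv_lhs => rw [hw']
    rw [List.append_assoc, List.append_assoc, List.drop_left, ← List.append_assoc]
  set S := w.drop (w.length - (r' + t)) with hSdef
  have hdropδ : S.drop δ = B ++ V ++ B := by
    rw [hSdef, List.drop_drop, ← hS']
    congr 1
    omega
  have htake1 : S.take t = B := by
    rw [hS, List.append_assoc, ← hBlen, List.take_left]
  have htake2 : (S.drop δ).take t = B := by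
    rw [hdropδ, List.append_assoc, ← hBlen, List.take_left]
  have hSlen : δ ≤ S.length := by
    rw [hSdef, List.length_drop]
    omega
  obtain ⟨X, hXne, hXpre⟩ := aux_square_of_shift S δ t hδ1 hδt hSlen
    (htake1.trans htake2.symm)
  exact hsf ⟨X, hXne, hXpre.isInfix.trans (List.drop_suffix _ w).isInfix⟩

/-- Strong separation of admissible overlap lengths: if `w` is a square-free
word of length `n`, `t ≥ 1`, and `r ≠ r'` both lie in `R_t(w)`, then
`|r − r'| ≥ t + 1`. -/
theorem statement11 {α : Type*} (w : List α) (n t : ℕ) (hn : w.length = n)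
    (hsf : Kautz.SquareFree w) (ht : 1 ≤ t)
    (r r' : ℕ) (hr : r ∈ Kautz.Rt w t) (hr' : r' ∈ Kautz.Rt w t)
    (hne : r ≠ r') :
    (t : ℤ) + 1 ≤ |(r : ℤ) - (r' : ℤ)| := by
  rcases Nat.lt_or_ge r r' with h | h
  · have := aux_sep w t hsf ht r r' hr hr' h
    have : (t : ℤ) + 1 ≤ (r' : ℤ) - r := by
      omega
    rw [abs_sub_comm]
    calc (t:ℤ) + 1 ≤ (r':ℤ) - r := this
      _ ≤ |(r':ℤ) - r| := le_abs_self _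
  · have hlt : r' < r := lt_of_le_of_ne h hne.symm
    have := aux_sep w t hsf ht r' r hr' hr hlt
    have h2 : (t : ℤ) + 1 ≤ (r : ℤ) - r' := by omega
    calc (t:ℤ) + 1 ≤ (r:ℤ) - r' := h2
      _ ≤ |(r:ℤ) - r'| := le_abs_self _
end

section
/- Let w be a 7/4⁺-power-free word. If w contains a factor of the form B·V·B with |B| = t ≥ 1 and |V| = m ≥ 1, then m ≥ ⌈t/3⌉. -/
open scoped BigOperators Classical

/-- If `w` is a `7/4⁺`-power-free word containing a factor `B·V·B` with
`|B| = t ≥ 1` and `|V| = m ≥ 1`, then `m ≥ ⌈t/3⌉`. -/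
theorem statement17 {α : Type*} (w : List α)
    (h74 : Kautz.SevenFourthsPlusFree w)
    (B V : List α) (t m : ℕ) (hB : B.length = t) (hV : V.length = m)
    (ht : 1 ≤ t) (hm : 1 ≤ m)
    (hfac : (B ++ V ++ B) <:+: w) :
    ⌈(t : ℚ) / 3⌉ ≤ (m : ℤ) := by
  by_contra h
  push_neg at h
  rw [Int.lt_ceil] at h
  have htm : 3 * m < t := by
    have : (3 * m : ℚ) < t := by
      rw [lt_div_iff₀ (by norm_num : (0:ℚ) < 3)] at h
      push_cast at h ⊢
      linarith
    exact_mod_cast this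
  apply h74
  refine ⟨B ++ V, B, 1, ?_, le_refl 1, List.prefix_append B V, ?_, ?_⟩
  · intro hx
    have := congrArg List.length hx
    simp [hB, hV] at this
    omega
  · simpa [List.append_assoc] using hfac
  · simp [hB, hV]
    omega
end

section
/- Let d ≥ 2 be an integer and let w be an unbordered 7/4⁺-power-free word of length D+1. Then ∑_{j=1}^{⌈(D+1)/2⌉} ∑_{r ∈ R_j(w)} d^{−(r−j)} ≤ 4/(d−1). -/
/-! An element `r ∈ R_j(w)` exhibits a factor `B V B` of `w` with period `r` and length `r + j`,
and two elements `r < r'` of `R_j(w)` exhibit a factor with period `r' - r` and length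
`r' - r + j`. Since `w` is `7/4⁺`-power-free, a factor of period `p` and length `p + j` needs
`4 j ≤ 3 p`. So the exponents `r - j` are at least `⌈j/3⌉` and pairwise at least `2` apart, and with
`x = 1/d` the inner sum is at most `x ^ ⌈j/3⌉ / (1 - x²)`. Summing over `j` gives at most
`3x / ((1 - x)(1 - x²)) = 3d² / ((d - 1)(d² - 1))`, which is `≤ 4 / (d - 1)` as `d² ≥ 4`. -/

open scoped BigOperators Classical

theorem List.exists_flatten_replicate_append_of_prefix_append {α : Type*} {C B : List α}
    (hC : C ≠ []) (hB : B <+: C ++ B) :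
    ∃ k y, 1 ≤ k ∧ y <+: C ∧ C ++ B = (List.replicate k C).flatten ++ y := by
  by_cases hBC : B.length ≤ C.length
  · exact ⟨1, B, le_rfl, List.prefix_of_prefix_length_le hB (List.prefix_append _ _) hBC,
      by simp⟩
  · obtain ⟨B', rfl⟩ : C <+: B :=
      List.prefix_of_prefix_length_le (List.prefix_append _ _) hB (by omega)
    have hB' : B' <+: C ++ B' := (List.prefix_append_right_inj C).mp hB
    obtain ⟨k, y, hk, hy, hCB'⟩ := exists_flatten_replicate_append_of_prefix_append hC hB'
    exact ⟨k + 1, y, by omega, hy, by rw [hCB', List.replicate_succ, List.flatten_cons,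
      List.append_assoc]⟩
termination_by B.length
decreasing_by
  rw [← ‹C ++ B' = B›, List.length_append]
  have := List.length_pos_iff.mpr hC
  omega

namespace Kautz

variable {α : Type*} {w : List α}

theorem SevenFourthsPlusFree.four_mul_length_le (h : SevenFourthsPlusFree w) {C B : List α}
    (hC : C ≠ []) (hB : B <+: C ++ B) (hCB : C ++ B <:+: w) :
    4 * B.length ≤ 3 * C.length := by
  obtain ⟨k, y, hk, hy, hCB_eq⟩ := List.exists_flatten_replicate_append_of_prefix_append hC hB
  have hlen := congrArg List.length hCB_eq
  simp only [List.length_append, List.length_flatten, List.map_replicate, List.sum_replicate,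
    smul_eq_mul] at hlen
  by_contra hlt
  exact h ⟨C, y, k, hC, hk, hy, hCB_eq ▸ hCB, by omega⟩

theorem length_suffixWord {n : ℕ} (hn : n ≤ w.length) : (suffixWord w n).length = n := by
  simp only [suffixWord, List.length_drop]
  omega

theorem suffixWord_suffix (n : ℕ) : suffixWord w n <:+ w := List.drop_suffix _ _

theorem suffixWord_eq_take_append {m n : ℕ} (hmn : m ≤ n) (hn : n ≤ w.length) :
    suffixWord w n = (suffixWord w n).take (n - m) ++ suffixWord w m := by
  conv_lhs => rw [← List.take_append_drop (n - m) (suffixWord w n)]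
  simp only [suffixWord, List.drop_drop]
  congr 2
  omega

theorem bounds_of_mem_Rt {j r : ℕ} (hr : r ∈ Rt w j) : j + 1 ≤ r ∧ r + j + 1 ≤ w.length := by
  simp only [Rt, Finset.mem_filter, Finset.mem_Icc] at hr
  omega

theorem suffixWord_prefix_of_mem_Rt {j r : ℕ} (hr : r ∈ Rt w j) :
    suffixWord w j <+: suffixWord w (r + j) := by
  have hbounds := bounds_of_mem_Rt hr
  simp only [Rt, Finset.mem_filter] at hr
  obtain ⟨-, A, V, -, hw, hV⟩ := hr
  set S := suffixWord w j
  have hS : S.length = j := length_suffixWord (by omega)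
  have hwlen : w.length = A.length + r + j := by
    have := congrArg List.length hw
    simp only [List.length_append, hS] at this
    omega
  have hsuf : suffixWord w (r + j) = S ++ V ++ S := by
    rw [suffixWord, show w.length - (r + j) = A.length by omega]
    conv_lhs => rw [hw]
    simp
  rw [hsuf, List.append_assoc]
  exact List.prefix_append _ _

theorem SevenFourthsPlusFree.four_mul_le_of_prefix_suffixWord (h : SevenFourthsPlusFree w)
    {j r r' : ℕ} (hrr' : r < r') (hr'w : r' + j ≤ w.length)
    (hocc : suffixWord w j <+: suffixWord w (r + j))
    (hocc' : suffixWord w j <+: suffixWord w (r' + j)) :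
    4 * j ≤ 3 * (r' - r) := by
  set S := suffixWord w j
  set C := (suffixWord w (r' + j)).take (r' - r)
  have hS : S.length = j := length_suffixWord (by omega)
  have hC : C.length = r' - r := by
    simp only [C, List.length_take, length_suffixWord hr'w]
    omega
  have hsplit : suffixWord w (r' + j) = C ++ suffixWord w (r + j) := by
    rw [suffixWord_eq_take_append (m := r + j) (by omega) hr'w, Nat.add_sub_add_right]
  have hCS : C ++ S <+: suffixWord w (r' + j) :=
    hsplit ▸ (List.prefix_append_right_inj C).mpr hocc
  have hSCS : S <+: C ++ S := List.prefix_of_prefix_length_le hocc' hCS (by simp)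
  have hCne : C ≠ [] := List.ne_nil_of_length_pos (by omega)
  have := h.four_mul_length_le hCne hSCS (hCS.isInfix.trans (suffixWord_suffix _).isInfix)
  rwa [hS, hC] at this

theorem SevenFourthsPlusFree.four_mul_le_of_mem_Rt (h : SevenFourthsPlusFree w) {j r : ℕ}
    (hr : r ∈ Rt w j) : 4 * j ≤ 3 * r := by
  have hbounds := bounds_of_mem_Rt hr
  simpa using h.four_mul_le_of_prefix_suffixWord (r := 0) (by omega) (by omega)
    (by simp) (suffixWord_prefix_of_mem_Rt hr)

theorem SevenFourthsPlusFree.four_mul_le_sub_of_mem_Rt (h : SevenFourthsPlusFree w)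
    {j r r' : ℕ} (hr : r ∈ Rt w j) (hr' : r' ∈ Rt w j) (hrr' : r < r') :
    4 * j ≤ 3 * (r' - r) := by
  have hbounds := bounds_of_mem_Rt hr'
  exact h.four_mul_le_of_prefix_suffixWord hrr' (by omega) (suffixWord_prefix_of_mem_Rt hr)
    (suffixWord_prefix_of_mem_Rt hr')

end Kautz

theorem sum_Icc_pow_ceil_div_three {R : Type*} [CommSemiring R] (x : R) (n : ℕ) :
    ∑ j ∈ Finset.Icc 1 (3 * n), x ^ ((j + 2) / 3) = 3 * ∑ s ∈ Finset.Icc 1 n, x ^ s := by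
  induction n with
  | zero => simp
  | succ n ih =>
    rw [show 3 * (n + 1) = 3 * n + 1 + 1 + 1 by ring, Finset.sum_Icc_succ_top (by omega),
      Finset.sum_Icc_succ_top (by omega), Finset.sum_Icc_succ_top (by omega), ih,
      Finset.sum_Icc_succ_top (by omega)]
    simp only [show (3 * n + 1 + 2) / 3 = n + 1 by omega,
      show (3 * n + 1 + 1 + 2) / 3 = n + 1 by omega,
      show (3 * n + 1 + 1 + 1 + 2) / 3 = n + 1 by omega]
    ring

section GeometricBounds

variable {K : Type*} [Field K] [LinearOrder K] [IsStrictOrderedRing K] {x : K}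

theorem sum_pow_le_of_separated (hx0 : 0 ≤ x) (hx1 : x < 1) {δ : ℕ} (hδ : 0 < δ)
    (R : Finset ℕ) {m : ℕ} (hm : ∀ r ∈ R, m ≤ r)
    (hsep : ∀ r ∈ R, ∀ r' ∈ R, r < r' → r + δ ≤ r') :
    ∑ r ∈ R, x ^ r ≤ x ^ m / (1 - x ^ δ) := by
  have hxδ : 0 < 1 - x ^ δ := sub_pos.2 (pow_lt_one₀ hx0 hx1 hδ.ne')
  induction R using Finset.induction_on_min generalizing m with
  | empty => simpa using div_nonneg (pow_nonneg hx0 m) hxδ.le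
  | insert a s ha ih =>
    have hrest : ∑ r ∈ s, x ^ r ≤ x ^ (a + δ) / (1 - x ^ δ) :=
      ih (fun r hr ↦ hsep a (s.mem_insert_self a) r (s.mem_insert_of_mem hr) (ha r hr))
        (fun r hr r' hr' ↦ hsep r (s.mem_insert_of_mem hr) r' (s.mem_insert_of_mem hr'))
    have hgeom : x ^ a + x ^ (a + δ) / (1 - x ^ δ) = x ^ a / (1 - x ^ δ) := by
      field_simp
      ring
    calc ∑ r ∈ insert a s, x ^ r = x ^ a + ∑ r ∈ s, x ^ r :=
          Finset.sum_insert fun has ↦ (ha a has).false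
      _ ≤ x ^ a / (1 - x ^ δ) := by linarith
      _ ≤ x ^ m / (1 - x ^ δ) := div_le_div_of_nonneg_right
          (pow_le_pow_of_le_one hx0 hx1.le (hm a (s.mem_insert_self a))) hxδ.le

theorem sum_Icc_pow_ceil_div_three_le (hx0 : 0 ≤ x) (hx1 : x < 1) (J : ℕ) :
    ∑ j ∈ Finset.Icc 1 J, x ^ ((j + 2) / 3) ≤ 3 * x / (1 - x) := by
  calc ∑ j ∈ Finset.Icc 1 J, x ^ ((j + 2) / 3)
      ≤ ∑ j ∈ Finset.Icc 1 (3 * J), x ^ ((j + 2) / 3) :=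
        Finset.sum_le_sum_of_subset_of_nonneg (Finset.Icc_subset_Icc_right (by omega))
          fun _ _ _ ↦ pow_nonneg hx0 _
    _ = 3 * ∑ s ∈ Finset.Ico 1 (J + 1), x ^ s := sum_Icc_pow_ceil_div_three x J
    _ ≤ 3 * (x ^ 1 / (1 - x)) := by gcongr; exact geom_sum_Ico_le_of_lt_one hx0 hx1
    _ = 3 * x / (1 - x) := by ring

end GeometricBounds

theorem three_mul_inv_div_le {c : ℝ} (hc : 2 ≤ c) :
    3 * c⁻¹ / (1 - c⁻¹) / (1 - c⁻¹ ^ 2) ≤ 4 / (c - 1) := by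
  have hc1 : 0 < c - 1 := by linarith
  have hc2 : 0 < c ^ 2 - 1 := by nlinarith
  rw [show 3 * c⁻¹ / (1 - c⁻¹) / (1 - c⁻¹ ^ 2) = 3 * c ^ 2 / ((c - 1) * (c ^ 2 - 1)) by
    field_simp, div_le_div_iff₀ (by positivity) hc1]
  nlinarith

namespace Kautz

variable {α : Type*} {w : List α}

theorem SevenFourthsPlusFree.sum_Rt_zpow_le (h : SevenFourthsPlusFree w) {c : ℝ} (hc : 1 < c)
    {j : ℕ} (hj : 1 ≤ j) :
    ∑ r ∈ Rt w j, c ^ ((j : ℤ) - r) ≤ c⁻¹ ^ ((j + 2) / 3) / (1 - c⁻¹ ^ 2) := by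
  have hterm : ∀ r ∈ Rt w j, c ^ ((j : ℤ) - r) = c⁻¹ ^ (r - j) := by
    intro r hr
    have := (bounds_of_mem_Rt hr).1
    rw [inv_pow, ← zpow_natCast, ← zpow_neg, Nat.cast_sub (by omega), neg_sub]
  have hinj : Set.InjOn (· - j) (Rt w j : Set ℕ) := fun r hr r' hr' hrr' ↦ by
    have := (bounds_of_mem_Rt hr).1
    have := (bounds_of_mem_Rt hr').1
    simp only at hrr'
    omega
  rw [Finset.sum_congr rfl hterm, ← Finset.sum_image (f := (c⁻¹ ^ ·)) hinj]
  refine sum_pow_le_of_separated (by positivity) (inv_lt_one_of_one_lt₀ hc) two_pos _ ?_ ?_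
  · simp only [Finset.mem_image]
    rintro _ ⟨r, hr, rfl⟩
    have := h.four_mul_le_of_mem_Rt hr
    omega
  · simp only [Finset.mem_image]
    rintro _ ⟨r, hr, rfl⟩ _ ⟨r', hr', rfl⟩ hlt
    have := (bounds_of_mem_Rt hr).1
    have := (bounds_of_mem_Rt hr').1
    have := h.four_mul_le_sub_of_mem_Rt hr hr' (by omega)
    omega

end Kautz

theorem statement18_general {α : Type*} (d D : ℕ) (hd : 2 ≤ d) (w : List α)
    (h74 : Kautz.SevenFourthsPlusFree w) :
    ∑ j ∈ Finset.Icc 1 ((D + 2) / 2), ∑ r ∈ Kautz.Rt w j,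
        (d : ℝ) ^ ((j : ℤ) - (r : ℤ))
      ≤ 4 / ((d : ℝ) - 1) := by
  have hd' : (2 : ℝ) ≤ d := by exact_mod_cast hd
  set x : ℝ := (d : ℝ)⁻¹
  have hx0 : 0 ≤ x := by positivity
  have hx1 : x < 1 := inv_lt_one_of_one_lt₀ (by linarith)
  have hx2 : 0 < 1 - x ^ 2 := sub_pos.2 (pow_lt_one₀ hx0 hx1 two_ne_zero)
  calc _ ≤ ∑ j ∈ Finset.Icc 1 ((D + 2) / 2), x ^ ((j + 2) / 3) / (1 - x ^ 2) :=
        Finset.sum_le_sum fun j hj ↦ h74.sum_Rt_zpow_le (by linarith) (Finset.mem_Icc.1 hj).1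
    _ = (∑ j ∈ Finset.Icc 1 ((D + 2) / 2), x ^ ((j + 2) / 3)) / (1 - x ^ 2) :=
        (Finset.sum_div ..).symm
    _ ≤ 3 * x / (1 - x) / (1 - x ^ 2) := by
        gcongr
        exact sum_Icc_pow_ceil_div_three_le hx0 hx1 _
    _ ≤ 4 / ((d : ℝ) - 1) := three_mul_inv_div_le hd'

/-- For `d ≥ 2` and an unbordered `7/4⁺`-power-free word `w` of length `D+1`,
`∑_{j=1}^{⌈(D+1)/2⌉} ∑_{r ∈ R_j(w)} d^{−(r−j)} ≤ 4/(d−1)`. -/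
theorem statement18 {α : Type*} (d D : ℕ) (hd : 2 ≤ d) (w : List α)
    (hlen : w.length = D + 1)
    (hub : Kautz.Unbordered w) (h74 : Kautz.SevenFourthsPlusFree w) :
    ∑ j ∈ Finset.Icc 1 ((D + 2) / 2), ∑ r ∈ Kautz.Rt w j,
        (d : ℝ) ^ ((j : ℤ) - (r : ℤ))
      ≤ 4 / ((d : ℝ) - 1) :=
  statement18_general d D hd w h74
end

section
/- Let n ≥ 2 and let a_1, a_2, …, a_n be nonnegative real numbers. Then ∑_{t=1}^{n−1} max(a_t, a_{t+1}) ≥ ((n−1)/n)·∑_{t=1}^{n} a_t. -/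
open scoped BigOperators Classical

/-- For `n ≥ 2` and nonnegative reals `a₁,…,a_n`,
`∑_{t=1}^{n−1} max(a_t, a_{t+1}) ≥ ((n−1)/n)·∑_{t=1}^{n} a_t`. -/
theorem statement19 (n : ℕ) (hn : 2 ≤ n) (a : ℕ → ℝ)
    (ha : ∀ t, 1 ≤ t → t ≤ n → 0 ≤ a t) :
    (((n : ℝ) - 1) / (n : ℝ)) * ∑ t ∈ Finset.Icc 1 n, a t
      ≤ ∑ t ∈ Finset.Icc 1 (n - 1), max (a t) (a (t + 1)) := by
  obtain ⟨j, hj, hjmin⟩ := Finset.exists_min_image (Finset.Icc 1 n) a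
    ⟨1, by simp [Finset.mem_Icc]; omega⟩
  simp only [Finset.mem_Icc] at hj
  have hnpos : (0:ℝ) < (n:ℝ) := by positivity
  have hcard : (Finset.Icc 1 n).card = n := by simp
  set S := ∑ t ∈ Finset.Icc 1 n, a t with hS
  have hmin : (n:ℝ) * a j ≤ S := by
    calc (n:ℝ) * a j = ∑ _t ∈ Finset.Icc 1 n, a j := by
          rw [Finset.sum_const, hcard]; ring
      _ ≤ S := Finset.sum_le_sum fun t ht => hjmin t ht
  have hIcc : ∀ m : ℕ, Finset.Icc 1 m = Finset.Ioc 0 m := by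
    intro m; ext x; simp [Finset.mem_Icc, Finset.mem_Ioc]; omega
  have hsplit : S = (∑ t ∈ Finset.Ioc 0 (j-1), a t) + a j + ∑ t ∈ Finset.Ioc j n, a t := by
    rw [hS, hIcc, ← Finset.sum_Ioc_consecutive a (by omega : 0 ≤ j-1) (by omega : j-1 ≤ n)]
    have h1 : Finset.Ioc (j-1) n = insert j (Finset.Ioc j n) := by
      ext x; simp [Finset.mem_Ioc, Finset.mem_insert]; omega
    rw [h1, Finset.sum_insert (by simp)]
    ring
  have hreidx : ∑ t ∈ Finset.Ioc (j-1) (n-1), a (t+1) = ∑ t ∈ Finset.Ioc j n, a t := by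
    have h : Finset.Ioc j n = (Finset.Ioc (j-1) (n-1)).map (addRightEmbedding 1) := by
      rw [Finset.map_add_right_Ioc]; congr 1 <;> omega
    rw [h, Finset.sum_map]
    simp [addRightEmbedding]
  have key : S - a j ≤ ∑ t ∈ Finset.Icc 1 (n-1), max (a t) (a (t+1)) := by
    have h2 : (∑ t ∈ Finset.Ioc 0 (j-1), a t) + ∑ t ∈ Finset.Ioc (j-1) (n-1), a (t+1)
        ≤ ∑ t ∈ Finset.Icc 1 (n-1), max (a t) (a (t+1)) := by
      rw [hIcc, ← Finset.sum_Ioc_consecutive _ (by omega : 0 ≤ j-1) (by omega : j-1 ≤ n-1)]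
      gcongr with t ht t ht
      · exact le_max_left _ _
      · exact le_max_right _ _
    rw [hreidx] at h2
    rw [hsplit]
    linarith
  have hSnn : 0 ≤ S := Finset.sum_nonneg fun t ht => by
    simp only [Finset.mem_Icc] at ht; exact ha t ht.1 ht.2
  rw [div_mul_eq_mul_div, div_le_iff₀ hnpos]
  nlinarith [key, hmin]
end
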